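/- arXiv:1503.02885 — 4 statements merged into one kernel-verified Lean document; each statement's English description precedes it below -/
import Mathlib

section
/- Let k ≥ 3 be a positive integer. Then there is a constant c₁ = c₁(k) > 0 such that for every large enough n the following holds: if n^{-2/(k+1)} ≤ p ≤ 4·n^{-2/(k+1)}, then the probability that a random graph G ~ G(T_{n,k}, p) contains no good copy of K_k is at most exp(−c₁·n²·p). -/
namespace TournamentGame

variable {V : Type*} [DecidableEq V]

/-- The underlying undirected edges of a set of oriented edges. -/
def undirect (M : Finset (V × V)) : Finset (Sym2 V) :=
  M.image fun p => s(p.1, p.2)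

/-- `MakerWin X F b M B` : in the (1:b) Maker-Breaker game on board `X`, with Maker
having claimed `M`, Breaker having claimed `B`, and Maker to move, Maker has a strategy
to claim all edges of some winning set (i.e. reach a position with `F` on her edges). -/
inductive MakerWin (X : Finset (Sym2 V)) (F : Finset (Sym2 V) → Prop) (b : ℕ) :
    Finset (Sym2 V) → Finset (Sym2 V) → Prop
  | win (M B : Finset (Sym2 V)) : F M → MakerWin X F b M B
  | move (M B : Finset (Sym2 V)) (e : Sym2 V) (heX : e ∈ X) (hefree : e ∉ M ∪ B)
      (h : ∀ B' : Finset (Sym2 V), B' ⊆ X \ (insert e M ∪ B) →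
        B'.card = min b (X \ (insert e M ∪ B)).card →
        MakerWin X F b (insert e M) (B ∪ B')) :
      MakerWin X F b M B

/-- `BreakerBlock X F b M B` : Maker to move; Breaker has a strategy ensuring that `F`
never holds on Maker's edge set. -/
inductive BreakerBlock (X : Finset (Sym2 V)) (F : Finset (Sym2 V) → Prop) (b : ℕ) :
    Finset (Sym2 V) → Finset (Sym2 V) → Prop
  | step (M B : Finset (Sym2 V)) (hF : ¬ F M) (resp : Sym2 V → Finset (Sym2 V))
      (hsub : ∀ e ∈ X, e ∉ M ∪ B → resp e ⊆ X \ (insert e M ∪ B))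
      (hcard : ∀ e ∈ X, e ∉ M ∪ B → (resp e).card = min b (X \ (insert e M ∪ B)).card)
      (h : ∀ e ∈ X, e ∉ M ∪ B → BreakerBlock X F b (insert e M) (B ∪ resp e)) :
      BreakerBlock X F b M B

/-- Oriented (tournament-game) version of `MakerWin`: Maker claims an edge together with
an orientation; her position is a set of oriented edges. -/
inductive OMakerWin (X : Finset (Sym2 V)) (F : Finset (V × V) → Prop) (b : ℕ) :
    Finset (V × V) → Finset (Sym2 V) → Prop
  | win (M : Finset (V × V)) (B : Finset (Sym2 V)) : F M → OMakerWin X F b M B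
  | move (M : Finset (V × V)) (B : Finset (Sym2 V)) (x y : V)
      (heX : s(x, y) ∈ X) (hefree : s(x, y) ∉ undirect M ∪ B)
      (h : ∀ B' : Finset (Sym2 V), B' ⊆ X \ (insert s(x, y) (undirect M) ∪ B) →
        B'.card = min b (X \ (insert s(x, y) (undirect M) ∪ B)).card →
        OMakerWin X F b (insert (x, y) M) (B ∪ B')) :
      OMakerWin X F b M B

/-- Oriented version of `BreakerBlock`. -/
inductive OBreakerBlock (X : Finset (Sym2 V)) (F : Finset (V × V) → Prop) (b : ℕ) :
    Finset (V × V) → Finset (Sym2 V) → Prop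
  | step (M : Finset (V × V)) (B : Finset (Sym2 V)) (hF : ¬ F M)
      (resp : V → V → Finset (Sym2 V))
      (hsub : ∀ x y : V, s(x, y) ∈ X → s(x, y) ∉ undirect M ∪ B →
        resp x y ⊆ X \ (insert s(x, y) (undirect M) ∪ B))
      (hcard : ∀ x y : V, s(x, y) ∈ X → s(x, y) ∉ undirect M ∪ B →
        (resp x y).card = min b (X \ (insert s(x, y) (undirect M) ∪ B)).card)
      (h : ∀ x y : V, s(x, y) ∈ X → s(x, y) ∉ undirect M ∪ B →
        OBreakerBlock X F b (insert (x, y) M) (B ∪ resp x y)) :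
      OBreakerBlock X F b M B

/-- Position with Breaker to move, in the unoriented game: Breaker can respond and
then keep blocking forever. -/
def BreakerTurn (X : Finset (Sym2 V)) (F : Finset (Sym2 V) → Prop) (b : ℕ)
    (M B : Finset (Sym2 V)) : Prop :=
  ¬ F M ∧ ∃ B' : Finset (Sym2 V), B' ⊆ X \ (M ∪ B) ∧
    B'.card = min b (X \ (M ∪ B)).card ∧ BreakerBlock X F b M (B ∪ B')

/-- Position with Breaker to move, in the oriented game. -/
def OBreakerTurn (X : Finset (Sym2 V)) (F : Finset (V × V) → Prop) (b : ℕ)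
    (M : Finset (V × V)) (B : Finset (Sym2 V)) : Prop :=
  ¬ F M ∧ ∃ B' : Finset (Sym2 V), B' ⊆ X \ (undirect M ∪ B) ∧
    B'.card = min b (X \ (undirect M ∪ B)).card ∧ OBreakerBlock X F b M (B ∪ B')

/-- Winning sets of the triangle game. -/
def HasTriangle (M : Finset (Sym2 V)) : Prop :=
  ∃ x y z : V, x ≠ y ∧ y ≠ z ∧ x ≠ z ∧ s(x, y) ∈ M ∧ s(y, z) ∈ M ∧ s(x, z) ∈ M

/-- Maker's oriented edges contain a cyclic (directed) triangle. -/
def HasCyclicTriangle (M : Finset (V × V)) : Prop :=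
  ∃ x y z : V, x ≠ y ∧ y ≠ z ∧ x ≠ z ∧ (x, y) ∈ M ∧ (y, z) ∈ M ∧ (z, x) ∈ M

/-- Maker's oriented edges contain an acyclic (transitive) triangle. -/
def HasAcyclicTriangle (M : Finset (V × V)) : Prop :=
  ∃ x y z : V, x ≠ y ∧ y ≠ z ∧ x ≠ z ∧ (x, y) ∈ M ∧ (y, z) ∈ M ∧ (x, z) ∈ M

/-- A tournament on `Fin k`, given by its arc relation. -/
def IsTournament {k : ℕ} (T : Fin k → Fin k → Prop) : Prop :=
  (∀ i, ¬ T i i) ∧ ∀ i j : Fin k, i ≠ j → (T i j ↔ ¬ T j i)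

/-- Maker's oriented edges contain a copy of the tournament `T`. -/
def HasTCopy {k : ℕ} (T : Fin k → Fin k → Prop) (M : Finset (V × V)) : Prop :=
  ∃ f : Fin k → V, Function.Injective f ∧ ∀ i j : Fin k, T i j → (f i, f j) ∈ M

/-- The edge set of the complete graph `K_n`. -/
def completeEdges (n : ℕ) : Finset (Sym2 (Fin n)) :=
  Finset.univ.filter fun e => ¬ e.IsDiag

/-- The edge set of the Turán graph `T_{n,k}` : classes are residues mod `k`. -/
def turanEdges (n k : ℕ) : Finset (Sym2 (Fin n)) :=
  Finset.univ.filter fun e => ¬ (e.map fun v : Fin n => v.val % k).IsDiag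

/-- `A` contains a good copy of `K_k` (all vertices in distinct classes of `T_{n,k}`). -/
def GoodCopy (n k : ℕ) (A : Finset (Sym2 (Fin n))) : Prop :=
  ∃ f : Fin k → Fin n, Function.Injective f ∧
    (∀ i j : Fin k, i ≠ j → (f i).val % k ≠ (f j).val % k) ∧
    (∀ i j : Fin k, i ≠ j → s(f i, f j) ∈ A)

open Classical in
/-- Probability that a `p`-random subset `A` of `E` (each element kept independently with
probability `p`) satisfies `P`. This is the model `G(E, p)`. -/
noncomputable def edgeProb {α : Type*} [DecidableEq α] (E : Finset α) (p : ℝ)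
    (P : Finset α → Prop) : ℝ :=
  ∑ A ∈ E.powerset, if P A then p ^ A.card * (1 - p) ^ (E.card - A.card) else 0

open Classical in
/-- Probability that a uniformly random `M`-element subset of `E` satisfies `P`.
This is the model `G(E, M)`. -/
noncomputable def uniformProb {α : Type*} [DecidableEq α] (E : Finset α) (M : ℕ)
    (P : Finset α → Prop) : ℝ :=
  ((E.powerset.filter fun A => A.card = M ∧ P A).card : ℝ) /
    ((E.powerset.filter fun A => A.card = M).card : ℝ)

/-- The three edges of a triangle on `x`, `y`, `z`. -/
def triEdges (x y z : V) : Finset (Sym2 V) := {s(x, y), s(y, z), s(x, z)}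

/-- `x`, `y`, `z` form a triangle of the graph with edge set `A`. -/
def IsTriangleIn (A : Finset (Sym2 V)) (x y z : V) : Prop :=
  x ≠ y ∧ y ≠ z ∧ x ≠ z ∧ s(x, y) ∈ A ∧ s(y, z) ∈ A ∧ s(x, z) ∈ A

/-- The triangles of `A`, each recorded as its set of three edges: the vertex set of `T_A`. -/
def TriSets (A : Finset (Sym2 V)) : Set (Finset (Sym2 V)) :=
  {t | ∃ x y z : V, IsTriangleIn A x y z ∧ t = triEdges x y z}

/-- `C` is a triangle collection: every edge lies in a triangle and the graph `T_C` of
triangles (adjacent iff sharing an edge) is connected. -/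
def IsTriangleCollection (C : Finset (Sym2 V)) : Prop :=
  (∀ e ∈ C, ∃ x y z : V, IsTriangleIn C x y z ∧ e ∈ triEdges x y z) ∧
  ∀ t ∈ TriSets C, ∀ t' ∈ TriSets C,
    Relation.ReflTransGen
      (fun a b => a ∈ TriSets C ∧ b ∈ TriSets C ∧ (a ∩ b).Nonempty) t t'

/-- Adjacency of `K₃⁺`: a triangle on `{0,1,2}` with a pendant edge `{2,3}`. -/
def K3plusAdj (a b : Fin 4) : Prop :=
  (a.val < 3 ∧ b.val < 3 ∧ a ≠ b) ∨ (a.val = 2 ∧ b.val = 3) ∨ (a.val = 3 ∧ b.val = 2)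

/-- Adjacency of the path on `Fin m`. -/
def pathAdj {m : ℕ} (a b : Fin m) : Prop := a.val + 1 = b.val ∨ b.val + 1 = a.val

/-- `C` is very basic: `T_C` is (isomorphic to) a subgraph of `K₃⁺` or of a path `P_m`. -/
def VeryBasic (C : Finset (Sym2 V)) : Prop :=
  (∃ φ : TriSets C → Fin 4, Function.Injective φ ∧
    ∀ t t' : TriSets C, t ≠ t' → ((t : Finset (Sym2 V)) ∩ (t' : Finset (Sym2 V))).Nonempty →
      K3plusAdj (φ t) (φ t')) ∨
  (∃ m : ℕ, ∃ φ : TriSets C → Fin m, Function.Injective φ ∧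
    ∀ t t' : TriSets C, t ≠ t' → ((t : Finset (Sym2 V)) ∩ (t' : Finset (Sym2 V))).Nonempty →
      pathAdj (φ t) (φ t'))

/-- `C` is basic: there are distinct edges `e₁, e₂` with `C - eᵢ` very basic for both. -/
def Basic (C : Finset (Sym2 V)) : Prop :=
  ∃ e₁ ∈ C, ∃ e₂ ∈ C, e₁ ≠ e₂ ∧ VeryBasic (C.erase e₁) ∧ VeryBasic (C.erase e₂)

open Classical in
/-- The set of non-isolated vertices of the graph with edge set `C`. -/
noncomputable def support [Fintype V] (C : Finset (Sym2 V)) : Finset V :=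
  Finset.univ.filter fun v => ∃ e ∈ C, v ∈ e

open Classical in
/-- Degree of `v` in the graph with edge set `C`. -/
noncomputable def degreeIn (C : Finset (Sym2 V)) (v : V) : ℕ :=
  (C.filter fun e => v ∈ e).card

/-- The maximum density `m(C) = max_{H ⊆ C} e(H)/v(H)` is (strictly) less than `r`. -/
def MaxDensityLt [Fintype V] (C : Finset (Sym2 V)) (r : ℝ) : Prop :=
  ∀ D ⊆ C, D.Nonempty → (D.card : ℝ) / ((support D).card : ℝ) < r

/-- The edge set of the `k`-wheel: a cycle on `{0, …, k-1} ⊆ Fin (k+1)` together with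
all edges to the center, the vertex `k`. -/
def wheelEdges (k : ℕ) : Finset (Sym2 (Fin (k + 1))) :=
  ((Finset.univ : Finset (Fin k)).image fun i =>
    s((⟨i.val, by have := i.2; omega⟩ : Fin (k + 1)),
      (⟨(i.val + 1) % k, by have := i.2; exact Nat.lt_succ_of_lt (Nat.mod_lt _ (by omega))⟩ :
        Fin (k + 1)))) ∪
  ((Finset.univ : Finset (Fin k)).image fun i =>
    s((⟨i.val, by have := i.2; omega⟩ : Fin (k + 1)), (Fin.last k)))

/-!
Janson's inequality. For `g : Fin k → Fin m`, `m = n / 2 ^ (k + 1)`, the vertices `i + k * g i`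
(one in each class `i`) span a good copy of `K_k`. As `¬ GoodCopy` is a decreasing event it is
enough to take `p = n ^ (-2 / (k + 1)) = w ^ 2`, where `n * w ^ (k + 1) = 1`. Two copies agreeing
on a set `T` of `2 ≤ t < k` classes share `t.choose 2` edges, and since
`(k - t) * (k + 1) ≤ 2 * (k.choose 2 - t.choose 2)`, the at most `m ^ (k - t)` such partners of a
copy contribute at most `p ^ k.choose 2 / 2 ^ (k + 1)` to its `Δ`-term. The Janson exponent is
therefore at least `m ^ k * p ^ k.choose 2 / 2`, of order `n ^ k * p ^ k.choose 2 = n ^ 2 * p`.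
-/

open Finset

section EdgeProb

variable {α : Type*} [DecidableEq α] {E S : Finset α} {e : α} {p q : ℝ}
  {P Q : Finset α → Prop}

lemma edgeProb_congr (h : ∀ A ⊆ E, P A ↔ Q A) : edgeProb E p P = edgeProb E p Q := by
  unfold edgeProb
  refine sum_congr rfl fun A hA => ?_
  classical exact if_congr (h A (mem_powerset.1 hA)) rfl rfl

lemma edgeProb_mono (hp0 : 0 ≤ p) (hp1 : p ≤ 1) (h : ∀ A ⊆ E, P A → Q A) :
    edgeProb E p P ≤ edgeProb E p Q := by
  unfold edgeProb
  refine sum_le_sum fun A hA => ?_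
  have hw : 0 ≤ p ^ #A * (1 - p) ^ (#E - #A) := by have := sub_nonneg.2 hp1; positivity
  by_cases hP : P A
  · simp [hP, h A (mem_powerset.1 hA) hP]
  · split_ifs <;> simp [hw]

lemma edgeProb_nonneg (hp0 : 0 ≤ p) (hp1 : p ≤ 1) (P : Finset α → Prop) :
    0 ≤ edgeProb E p P := by
  have := sub_nonneg.2 hp1
  exact sum_nonneg fun A _ => by split_ifs <;> positivity

lemma edgeProb_true : edgeProb E p (fun _ => True) = 1 := by
  simp [edgeProb, sum_pow_mul_eq_add_pow]

lemma edgeProb_and_add_and_not (P Q : Finset α → Prop) :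
    edgeProb E p (fun A => P A ∧ Q A) + edgeProb E p (fun A => P A ∧ ¬ Q A)
      = edgeProb E p P := by
  unfold edgeProb
  rw [← sum_add_distrib]
  refine sum_congr rfl fun A _ => ?_
  by_cases hP : P A <;> by_cases hQ : Q A <;> simp [hP, hQ]

lemma edgeProb_insert (he : e ∉ E) (P : Finset α → Prop) :
    edgeProb (insert e E) p P
      = p * edgeProb E p (fun A => P (insert e A)) + (1 - p) * edgeProb E p P := by
  unfold edgeProb
  rw [sum_powerset_insert he, add_comm, mul_sum, mul_sum]
  congr 1
  · refine sum_congr rfl fun A hA => ?_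
    have hAE := card_le_card (mem_powerset.1 hA)
    have heA : e ∉ A := fun h => he (mem_powerset.1 hA h)
    rw [card_insert_of_notMem heA, card_insert_of_notMem he,
      show #E + 1 - (#A + 1) = #E - #A by omega]
    split_ifs <;> ring
  · refine sum_congr rfl fun A hA => ?_
    have hAE := card_le_card (mem_powerset.1 hA)
    rw [card_insert_of_notMem he, show #E + 1 - #A = #E - #A + 1 by omega]
    split_ifs <;> ring

lemma edgeProb_exists_le_sum {ι : Type*} (hp0 : 0 ≤ p) (hp1 : p ≤ 1)
    (s : Finset ι) (R : ι → Finset α → Prop) :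
    edgeProb E p (fun A => ∃ j ∈ s, R j A) ≤ ∑ j ∈ s, edgeProb E p (R j) := by
  classical
  induction s using Finset.induction_on with
  | empty => simp [edgeProb]
  | insert j s hj ih =>
    rw [sum_insert hj, ← edgeProb_and_add_and_not (fun A => ∃ i ∈ insert j s, R i A) (R j)]
    gcongr
    · exact edgeProb_mono hp0 hp1 fun A _ h => h.2
    · refine (edgeProb_mono hp0 hp1 fun A _ h => ?_).trans ih
      obtain ⟨⟨i, hi, hR⟩, hRj⟩ := h
      obtain rfl | hi := mem_insert.1 hi
      exacts [absurd hR hRj, ⟨i, hi, hR⟩]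

lemma edgeProb_inter_and_sdiff (hS : S ⊆ E) (P Q : Finset α → Prop) :
    edgeProb E p (fun A => P (A ∩ S) ∧ Q (A \ S))
      = edgeProb S p P * edgeProb (E \ S) p Q := by
  induction E using Finset.induction_on generalizing S P Q with
  | empty =>
    obtain rfl := subset_empty.1 hS
    by_cases hP : P ∅ <;> by_cases hQ : Q ∅ <;> simp [edgeProb, hP, hQ]
  | insert e E he ih =>
    rw [edgeProb_insert he]
    by_cases heS : e ∈ S
    · set S' := S.erase e
      have hS' : S' ⊆ E := fun x hx =>
        (mem_insert.1 (hS (mem_of_mem_erase hx))).resolve_left (ne_of_mem_erase hx)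
      have hPS : edgeProb S p P
          = p * edgeProb S' p (fun B => P (insert e B)) + (1 - p) * edgeProb S' p P := by
        rw [← edgeProb_insert (notMem_erase e S), insert_erase heS]
      have hsdiff : insert e E \ S = E \ S' := by
        ext x; by_cases hx : x = e <;> simp [S', hx, heS, he]
      rw [hPS, hsdiff, add_mul, mul_assoc, mul_assoc, ← ih hS', ← ih hS']
      congr 2 <;> refine edgeProb_congr fun A hA => ?_
      · have heA : e ∉ A := fun h => he (hA h)
        have h1 : insert e A ∩ S = insert e (A ∩ S') := by
          ext x; by_cases hx : x = e <;> simp [S', hx, heS]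
        have h2 : insert e A \ S = A \ S' := by
          ext x; by_cases hx : x = e <;> simp [S', hx, heS, heA]
        rw [h1, h2]
      · have heA : e ∉ A := fun h => he (hA h)
        have h1 : A ∩ S = A ∩ S' := by
          ext x; by_cases hx : x = e <;> simp [S', hx, heA]
        have h2 : A \ S = A \ S' := by
          ext x; by_cases hx : x = e <;> simp [S', hx, heA]
        rw [h1, h2]
    · have hS' : S ⊆ E := fun x hx =>
        (mem_insert.1 (hS hx)).resolve_left (ne_of_mem_of_not_mem hx heS)
      rw [insert_sdiff_of_notMem _ heS, edgeProb_insert (notMem_sdiff_of_notMem_left he),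
        mul_add, ← mul_assoc, ← mul_assoc, mul_comm _ p, mul_comm _ (1 - p), mul_assoc,
        mul_assoc, ← ih hS', ← ih hS']
      congr 2
      refine edgeProb_congr fun A _ => ?_
      rw [insert_inter_of_notMem heS, insert_sdiff_of_notMem _ heS]

lemma edgeProb_self_subset : edgeProb S p (fun A => S ⊆ A) = p ^ #S := by
  unfold edgeProb
  rw [sum_eq_single_of_mem S (mem_powerset_self S)]
  · simp
  · intro A hA hAS
    rw [if_neg fun h => hAS (subset_antisymm (mem_powerset.1 hA) h)]

lemma edgeProb_subset_and (hS : S ⊆ E) (hN : ∀ A, Q A ↔ Q (A \ S)) :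
    edgeProb E p (fun A => S ⊆ A ∧ Q A) = p ^ #S * edgeProb E p Q := by
  have h := edgeProb_inter_and_sdiff (p := p) hS (fun B => S ⊆ B) Q
  have h' := edgeProb_inter_and_sdiff (p := p) hS (fun _ => True) Q
  rw [edgeProb_self_subset] at h
  rw [edgeProb_true, one_mul, edgeProb_congr fun A _ => by rw [true_and, ← hN A]] at h'
  rw [h', ← h]
  exact edgeProb_congr fun A _ => by rw [subset_inter_iff, ← hN A]; simp

lemma edgeProb_subset (hS : S ⊆ E) : edgeProb E p (fun A => S ⊆ A) = p ^ #S := by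
  simpa [edgeProb_true] using edgeProb_subset_and (p := p) (Q := fun _ => True) hS (by simp)

/-- Harris' inequality. -/
lemma edgeProb_and_le_mul (hp0 : 0 ≤ p) (hp1 : p ≤ 1) (hP : Monotone P) (hQ : Antitone Q) :
    edgeProb E p (fun A => P A ∧ Q A) ≤ edgeProb E p P * edgeProb E p Q := by
  induction E using Finset.induction_on generalizing P Q with
  | empty => by_cases h1 : P ∅ <;> by_cases h2 : Q ∅ <;> simp [edgeProb, h1, h2]
  | insert e E he ih =>
    simp only [edgeProb_insert he]
    have hPe : Monotone fun A => P (insert e A) := fun A B h => hP (insert_subset_insert e h)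
    have hQe : Antitone fun A => Q (insert e A) := fun A B h => hQ (insert_subset_insert e h)
    have h1 := ih hPe hQe
    have h0 := ih hP hQ
    have hP01 : edgeProb E p P ≤ edgeProb E p fun A => P (insert e A) :=
      edgeProb_mono hp0 hp1 fun A _ => hP (subset_insert e A)
    have hQ01 : edgeProb E p (fun A => Q (insert e A)) ≤ edgeProb E p Q :=
      edgeProb_mono hp0 hp1 fun A _ => hQ (subset_insert e A)
    nlinarith [mul_nonneg (mul_nonneg hp0 (sub_nonneg.2 hp1))
      (mul_nonneg (sub_nonneg.2 hP01) (sub_nonneg.2 hQ01))]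

lemma edgeProb_le_edgeProb_of_antitone (hp0 : 0 ≤ p) (hpq : p ≤ q) (hq1 : q ≤ 1)
    (hQ : Antitone Q) : edgeProb E q Q ≤ edgeProb E p Q := by
  induction E using Finset.induction_on generalizing Q with
  | empty => by_cases h : Q ∅ <;> simp [edgeProb, h]
  | insert e E he ih =>
    rw [edgeProb_insert he, edgeProb_insert he]
    have h1 := ih fun A B h => hQ (insert_subset_insert e h)
    have h0 := ih hQ
    have hQ01 : edgeProb E p (fun A => Q (insert e A)) ≤ edgeProb E p Q :=
      edgeProb_mono hp0 (hpq.trans hq1) fun A _ => hQ (subset_insert e A)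
    nlinarith [mul_le_mul_of_nonneg_left h1 (hp0.trans hpq),
      mul_le_mul_of_nonneg_left h0 (sub_nonneg.2 hq1),
      mul_nonneg (sub_nonneg.2 hpq) (sub_nonneg.2 hQ01)]

end EdgeProb

lemma antitone_forall_not_subset {α ι : Type*} (S : ι → Finset α) (s : Finset ι) :
    Antitone fun A : Finset α => ∀ i ∈ s, ¬ S i ⊆ A :=
  fun _ _ hAB h i hi hSi => h i hi (hSi.trans hAB)

section Janson

variable {α ι : Type*} [DecidableEq α] {E : Finset α} {p : ℝ} {S : ι → Finset α}

/-- The `Δ`-term of Janson's inequality for `S j` against the family `s`. -/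
noncomputable def overlapSum (p : ℝ) (S : ι → Finset α) (j : ι) (s : Finset ι) : ℝ :=
  ∑ i ∈ s with (S j ∩ S i).Nonempty, p ^ #(S j ∪ S i)

noncomputable def jansonExponent [DecidableEq ι] (p : ℝ) (S : ι → Finset α) (s : Finset ι) :
    ℝ :=
  ∑ j ∈ s, (p ^ #(S j) - overlapSum p S j (s.erase j))

lemma overlapSum_mono (hp0 : 0 ≤ p) (j : ι) {s t : Finset ι} (hst : s ⊆ t) :
    overlapSum p S j s ≤ overlapSum p S j t :=
  sum_le_sum_of_subset_of_nonneg (filter_subset_filter _ hst) fun _ _ _ => by positivity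

lemma edgeProb_subset_and_not_forall_le (hp0 : 0 ≤ p) (hp1 : p ≤ 1) (hSE : ∀ i, S i ⊆ E)
    (j : ι) (s₀ s₁ : Finset ι) :
    edgeProb E p (fun A => (S j ⊆ A ∧ ∀ i ∈ s₀, ¬ S i ⊆ A) ∧ ¬ ∀ i ∈ s₁, ¬ S i ⊆ A)
      ≤ (∑ i ∈ s₁, p ^ #(S j ∪ S i)) * edgeProb E p (fun A => ∀ i ∈ s₀, ¬ S i ⊆ A) := by
  calc _ ≤ edgeProb E p (fun A => ∃ i ∈ s₁, S j ∪ S i ⊆ A ∧ ∀ i ∈ s₀, ¬ S i ⊆ A) := by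
        refine edgeProb_mono hp0 hp1 fun A _ ⟨⟨hj, h₀⟩, h₁⟩ => ?_
        obtain ⟨i, hi, hSi⟩ : ∃ i ∈ s₁, S i ⊆ A := by simpa using h₁
        exact ⟨i, hi, union_subset hj hSi, h₀⟩
    _ ≤ ∑ i ∈ s₁, edgeProb E p (fun A => S j ∪ S i ⊆ A ∧ ∀ i ∈ s₀, ¬ S i ⊆ A) :=
        edgeProb_exists_le_sum hp0 hp1 _ _
    _ ≤ ∑ i ∈ s₁, p ^ #(S j ∪ S i) * edgeProb E p (fun A => ∀ i ∈ s₀, ¬ S i ⊆ A) := by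
        refine sum_le_sum fun i _ => ?_
        rw [← edgeProb_subset (union_subset (hSE j) (hSE i))]
        exact edgeProb_and_le_mul hp0 hp1 (fun _ _ h hA => hA.trans h)
          (antitone_forall_not_subset S s₀)
    _ = _ := by rw [sum_mul]

/-- The Boppana–Spencer estimate behind Janson's inequality: the `S i` disjoint from `S j` are
independent of `S j ⊆ A`, and Harris' inequality controls the others. -/
lemma mul_edgeProb_le_edgeProb_subset_and (hp0 : 0 ≤ p) (hp1 : p ≤ 1) (hSE : ∀ i, S i ⊆ E)
    (j : ι) (s : Finset ι) :
    (p ^ #(S j) - overlapSum p S j s) * edgeProb E p (fun A => ∀ i ∈ s, ¬ S i ⊆ A)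
      ≤ edgeProb E p (fun A => S j ⊆ A ∧ ∀ i ∈ s, ¬ S i ⊆ A) := by
  set s₀ := s.filter fun i => ¬ (S j ∩ S i).Nonempty
  set s₁ := s.filter fun i => (S j ∩ S i).Nonempty
  have hindep : edgeProb E p (fun A => S j ⊆ A ∧ ∀ i ∈ s₀, ¬ S i ⊆ A)
      = p ^ #(S j) * edgeProb E p (fun A => ∀ i ∈ s₀, ¬ S i ⊆ A) := by
    refine edgeProb_subset_and (hSE j) fun A => forall₂_congr fun i hi => ?_
    have hdisj : Disjoint (S i) (S j) :=
      (disjoint_iff_inter_eq_empty.2 (not_nonempty_iff_eq_empty.1 (mem_filter.1 hi).2)).symm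
    rw [subset_sdiff, and_iff_left hdisj]
  have hbad := edgeProb_subset_and_not_forall_le hp0 hp1 hSE j s₀ s₁
  have hgood :
      edgeProb E p (fun A => (S j ⊆ A ∧ ∀ i ∈ s₀, ¬ S i ⊆ A) ∧ ∀ i ∈ s₁, ¬ S i ⊆ A)
        ≤ edgeProb E p (fun A => S j ⊆ A ∧ ∀ i ∈ s, ¬ S i ⊆ A) := by
    refine edgeProb_mono hp0 hp1 fun A _ ⟨⟨hj, h₀⟩, h₁⟩ => ⟨hj, fun i hi => ?_⟩
    by_cases hov : (S j ∩ S i).Nonempty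
    exacts [h₁ i (mem_filter.2 ⟨hi, hov⟩), h₀ i (mem_filter.2 ⟨hi, hov⟩)]
  have hsplit := edgeProb_and_add_and_not (E := E) (p := p)
    (fun A => S j ⊆ A ∧ ∀ i ∈ s₀, ¬ S i ⊆ A) (fun A => ∀ i ∈ s₁, ¬ S i ⊆ A)
  have hs₀ : edgeProb E p (fun A => ∀ i ∈ s, ¬ S i ⊆ A)
      ≤ edgeProb E p (fun A => ∀ i ∈ s₀, ¬ S i ⊆ A) :=
    edgeProb_mono hp0 hp1 fun A _ h i hi => h i (mem_filter.1 hi).1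
  rw [show ∑ i ∈ s₁, p ^ #(S j ∪ S i) = overlapSum p S j s from rfl] at hbad
  rcases le_or_gt 0 (p ^ #(S j) - overlapSum p S j s) with hb | hb
  · nlinarith [mul_le_mul_of_nonneg_left hs₀ hb]
  · nlinarith [edgeProb_nonneg (E := E) hp0 hp1 fun A => ∀ i ∈ s, ¬ S i ⊆ A,
      edgeProb_nonneg (E := E) hp0 hp1 fun A => S j ⊆ A ∧ ∀ i ∈ s, ¬ S i ⊆ A]

/-- Janson's inequality, with every overlapping pair counted twice. -/
theorem edgeProb_forall_not_subset_le_exp [DecidableEq ι] (hp0 : 0 ≤ p) (hp1 : p ≤ 1)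
    (hSE : ∀ i, S i ⊆ E) (s : Finset ι) :
    edgeProb E p (fun A => ∀ i ∈ s, ¬ S i ⊆ A)
      ≤ Real.exp (-jansonExponent p S s) := by
  induction s using Finset.induction_on with
  | empty => simp [jansonExponent, edgeProb_true]
  | insert j s hj ih =>
    set b := p ^ #(S j) - overlapSum p S j s
    have hstep : edgeProb E p (fun A => ∀ i ∈ insert j s, ¬ S i ⊆ A)
        ≤ Real.exp (-b) * edgeProb E p (fun A => ∀ i ∈ s, ¬ S i ⊆ A) := by
      have hsplit := edgeProb_and_add_and_not (E := E) (p := p)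
        (fun A => ∀ i ∈ s, ¬ S i ⊆ A) (fun A => S j ⊆ A)
      have hins : edgeProb E p (fun A => ∀ i ∈ insert j s, ¬ S i ⊆ A)
          = edgeProb E p (fun A => (∀ i ∈ s, ¬ S i ⊆ A) ∧ ¬ S j ⊆ A) :=
        edgeProb_congr fun A _ => by rw [forall_mem_insert, and_comm]
      have hand : edgeProb E p (fun A => (∀ i ∈ s, ¬ S i ⊆ A) ∧ S j ⊆ A)
          = edgeProb E p (fun A => S j ⊆ A ∧ ∀ i ∈ s, ¬ S i ⊆ A) :=
        edgeProb_congr fun A _ => and_comm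
      have := mul_edgeProb_le_edgeProb_subset_and hp0 hp1 hSE j s
      nlinarith [Real.add_one_le_exp (-b),
        edgeProb_nonneg (E := E) hp0 hp1 fun A => ∀ i ∈ s, ¬ S i ⊆ A]
    have hexp : jansonExponent p S (insert j s) ≤ b + jansonExponent p S s := by
      rw [jansonExponent, jansonExponent, sum_insert hj, erase_insert hj]
      gcongr with i
      exact overlapSum_mono hp0 i (erase_subset_erase i (subset_insert j s))
    calc _ ≤ Real.exp (-b) * edgeProb E p (fun A => ∀ i ∈ s, ¬ S i ⊆ A) := hstep
      _ ≤ Real.exp (-b) * Real.exp (-jansonExponent p S s) := by gcongr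
      _ ≤ _ := by rw [← Real.exp_add, Real.exp_le_exp]; linarith

end Janson

lemma antitone_not_goodCopy (n k : ℕ) : Antitone fun A => ¬ GoodCopy n k A :=
  fun _ _ hAB hB ⟨f, hf, hcls, hedge⟩ =>
    hB ⟨f, hf, hcls, fun i j hij => hAB (hedge i j hij)⟩

section CanonicalCopies

variable {n k m : ℕ} (hmk : m * k ≤ n)

/-- The vertex `i + k * g i` of class `i`; the map `g` picks one vertex in each class. -/
def copyVertex (g : Fin k → Fin m) (i : Fin k) : Fin n :=
  Fin.castLE hmk (finProdFinEquiv (g i, i))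

lemma copyVertex_val_mod (g : Fin k → Fin m) (i : Fin k) : (copyVertex hmk g i).val % k = i := by
  simp [copyVertex, finProdFinEquiv, Nat.mod_eq_of_lt i.2]

lemma copyVertex_eq_copyVertex_iff {g g' : Fin k → Fin m} {i i' : Fin k} :
    copyVertex hmk g i = copyVertex hmk g' i' ↔ i = i' ∧ g i = g' i' := by
  rw [copyVertex, copyVertex, (Fin.castLE_injective hmk).eq_iff, finProdFinEquiv.apply_eq_iff_eq,
    Prod.ext_iff, and_comm]

lemma copyVertex_injective (g : Fin k → Fin m) : Function.Injective (copyVertex hmk g) :=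
  fun _ _ h => ((copyVertex_eq_copyVertex_iff hmk).1 h).1

def copyEdges (g : Fin k → Fin m) : Finset (Sym2 (Fin n)) :=
  ((univ : Finset (Fin k)).offDiag.image Sym2.mk.uncurry).image (Sym2.map (copyVertex hmk g))

lemma mem_copyEdges {g : Fin k → Fin m} {e : Sym2 (Fin n)} :
    e ∈ copyEdges hmk g ↔
      ∃ i j, i ≠ j ∧ s(copyVertex hmk g i, copyVertex hmk g j) = e := by
  simp [copyEdges]

lemma card_copyEdges (g : Fin k → Fin m) : #(copyEdges hmk g) = k.choose 2 := by
  rw [copyEdges, card_image_of_injective _ (Sym2.map.injective (copyVertex_injective hmk g)),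
    Sym2.card_image_offDiag, card_univ, Fintype.card_fin]

lemma copyEdges_subset_turanEdges (g : Fin k → Fin m) : copyEdges hmk g ⊆ turanEdges n k := by
  intro e he
  obtain ⟨i, j, hij, rfl⟩ := (mem_copyEdges hmk).1 he
  simp [turanEdges, copyVertex_val_mod, Fin.val_inj, hij]

lemma goodCopy_of_copyEdges_subset {g : Fin k → Fin m} {A : Finset (Sym2 (Fin n))}
    (h : copyEdges hmk g ⊆ A) : GoodCopy n k A :=
  ⟨copyVertex hmk g, copyVertex_injective hmk g,
    fun i j hij => by simpa [copyVertex_val_mod, Fin.val_inj] using hij,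
    fun i j hij => h ((mem_copyEdges hmk).2 ⟨i, j, hij, rfl⟩)⟩

def agreeSet (g g' : Fin k → Fin m) : Finset (Fin k) := {i | g i = g' i}

/-- Two copies share only the edges inside the set of classes where they pick the same vertex. -/
lemma card_inter_copyEdges_le (g g' : Fin k → Fin m) :
    #(copyEdges hmk g ∩ copyEdges hmk g') ≤ (#(agreeSet g g')).choose 2 := by
  have hsub : copyEdges hmk g ∩ copyEdges hmk g' ⊆
      ((agreeSet g g').offDiag.image Sym2.mk.uncurry).image (Sym2.map (copyVertex hmk g)) := by
    intro e he
    obtain ⟨he, he'⟩ := mem_inter.1 he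
    obtain ⟨i, j, hij, rfl⟩ := (mem_copyEdges hmk).1 he
    obtain ⟨i', j', -, heq⟩ := (mem_copyEdges hmk).1 he'
    simp only [Sym2.eq_iff, copyVertex_eq_copyVertex_iff] at heq
    suffices i ∈ agreeSet g g' ∧ j ∈ agreeSet g g' by
      simpa using ⟨i, j, ⟨this.1, this.2, hij⟩, Or.inl ⟨rfl, rfl⟩⟩
    simp only [agreeSet, mem_filter, mem_univ, true_and]
    rcases heq with ⟨⟨rfl, h1⟩, rfl, h2⟩ | ⟨⟨rfl, h1⟩, rfl, h2⟩
    · exact ⟨h1.symm, h2.symm⟩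
    · exact ⟨h2.symm, h1.symm⟩
  calc _ ≤ _ := card_le_card hsub
    _ ≤ _ := card_image_le
    _ = _ := Sym2.card_image_offDiag _

lemma card_filter_agreeSet_eq_le (g : Fin k → Fin m) (T : Finset (Fin k)) :
    #{g' | agreeSet g g' = T} ≤ m ^ (k - #T) := by
  have hT : ∀ g', agreeSet g g' = T → ∀ i ∈ T, g' i = g i := by
    rintro g' rfl i hi
    exact ((mem_filter.1 hi).2).symm
  have hinj : Set.InjOn (fun (g' : Fin k → Fin m) (i : ↥Tᶜ) => g' i)
      ↑({g' | agreeSet g g' = T} : Finset (Fin k → Fin m)) := by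
    intro g₁ h₁ g₂ h₂ heq
    funext i
    by_cases hi : i ∈ T
    · rw [hT g₁ (mem_filter.1 h₁).2 i hi, hT g₂ (mem_filter.1 h₂).2 i hi]
    · exact congrFun heq ⟨i, mem_compl.2 hi⟩
  calc _ ≤ #(univ : Finset (↥Tᶜ → Fin m)) :=
        card_le_card_of_injOn _ (fun _ _ => mem_univ _) hinj
    _ = m ^ (k - #T) := by simp

/-- Grouping the copies `g'` by the set `T` of classes where they agree with `g`. -/
lemma overlapSum_copyEdges_le {p : ℝ} (hp0 : 0 ≤ p) (hp1 : p ≤ 1) (g : Fin k → Fin m) :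
    overlapSum p (copyEdges hmk) g (univ.erase g)
      ≤ ∑ T : Finset (Fin k) with 2 ≤ #T ∧ #T < k,
          (m : ℝ) ^ (k - #T) * p ^ (2 * k.choose 2 - (#T).choose 2) := by
  set F := (univ.erase g).filter fun g' => (copyEdges hmk g ∩ copyEdges hmk g').Nonempty
  have hmaps :
      ∀ g' ∈ F, agreeSet g g' ∈ ({T | 2 ≤ #T ∧ #T < k} : Finset (Finset (Fin k))) := by
    intro g' hg'
    obtain ⟨hne, hov⟩ := mem_filter.1 hg'
    obtain ⟨i, hi⟩ := Function.ne_iff.1 (ne_of_mem_erase hne)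
    refine mem_filter.2 ⟨mem_univ _, ?_, ?_⟩
    · by_contra! h
      have := card_inter_copyEdges_le hmk g g'
      rw [Nat.choose_eq_zero_of_lt h] at this
      exact hov.card_pos.ne' (Nat.le_zero.1 this)
    · simpa using card_lt_univ_of_notMem (s := agreeSet g g') (by simpa [agreeSet] using hi.symm)
  have hterm : ∀ g' ∈ F, p ^ #(copyEdges hmk g ∪ copyEdges hmk g')
      ≤ p ^ (2 * k.choose 2 - (#(agreeSet g g')).choose 2) := fun g' _ => by
    refine pow_le_pow_of_le_one hp0 hp1 ?_
    have := card_union_add_card_inter (copyEdges hmk g) (copyEdges hmk g')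
    have := card_inter_copyEdges_le hmk g g'
    rw [card_copyEdges, card_copyEdges] at *
    omega
  calc overlapSum p (copyEdges hmk) g (univ.erase g)
      ≤ ∑ g' ∈ F, p ^ (2 * k.choose 2 - (#(agreeSet g g')).choose 2) := sum_le_sum hterm
    _ = ∑ T : Finset (Fin k) with 2 ≤ #T ∧ #T < k,
          ∑ g' ∈ F with agreeSet g g' = T, p ^ (2 * k.choose 2 - (#T).choose 2) := by
        rw [← sum_fiberwise_of_maps_to hmaps]
        refine sum_congr rfl fun T _ => sum_congr rfl fun g' hg' => ?_
        rw [(mem_filter.1 hg').2]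
    _ ≤ _ := by
        refine sum_le_sum fun T _ => ?_
        rw [sum_const, nsmul_eq_mul]
        gcongr
        exact_mod_cast (card_le_card (filter_subset_filter _ (subset_univ F))).trans
          (card_filter_agreeSet_eq_le g T)

end CanonicalCopies

lemma two_mul_choose_two (n : ℕ) : 2 * n.choose 2 = n * (n - 1) := by
  rw [Nat.choose_two_right, Nat.mul_div_cancel' (Nat.even_mul_pred_self n).two_dvd]

lemma sub_mul_succ_le_two_mul_choose_sub {t k : ℕ} (ht : 2 ≤ t) (htk : t ≤ k) :
    (k - t) * (k + 1) ≤ 2 * (k.choose 2 - t.choose 2) := by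
  rw [Nat.mul_sub, two_mul_choose_two, two_mul_choose_two]
  obtain ⟨a, rfl⟩ := Nat.exists_eq_add_of_le htk
  obtain ⟨u, rfl⟩ := Nat.exists_eq_add_of_le ht
  rw [Nat.add_sub_cancel_left, show 2 + u + a - 1 = 1 + u + a by omega,
    show 2 + u - 1 = 1 + u by omega]
  apply Nat.le_sub_of_add_le
  nlinarith

section Exponents

variable {n k m : ℕ} {w : ℝ}

/-- The case `p = w ^ 2` with `n * w ^ (k + 1) ≤ 1`, i.e. `p ≤ n ^ (-2 / (k + 1))`. -/
lemma cast_pow_mul_pow_le (hw0 : 0 ≤ w) (hw1 : w ≤ 1) (hnw : n * w ^ (k + 1) ≤ 1)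
    (hm : (m : ℝ) ≤ n / 2 ^ (k + 1)) {t : ℕ} (ht : 2 ≤ t) (htk : t < k) :
    (m : ℝ) ^ (k - t) * (w ^ 2) ^ (2 * k.choose 2 - t.choose 2)
      ≤ (w ^ 2) ^ k.choose 2 / 2 ^ (k + 1) := by
  have hexp := sub_mul_succ_le_two_mul_choose_sub ht htk.le
  have hCK : t.choose 2 ≤ k.choose 2 := Nat.choose_le_choose 2 htk.le
  have ha : k - t ≠ 0 := by omega
  rw [show 2 * k.choose 2 - t.choose 2 = k.choose 2 + (k.choose 2 - t.choose 2) by omega,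
    pow_add, mul_left_comm, div_eq_mul_one_div (_ ^ _)]
  gcongr
  calc (m : ℝ) ^ (k - t) * (w ^ 2) ^ (k.choose 2 - t.choose 2)
      = (m : ℝ) ^ (k - t) * w ^ (2 * (k.choose 2 - t.choose 2)) := by rw [pow_mul]
    _ ≤ (n / 2 ^ (k + 1)) ^ (k - t) * w ^ ((k + 1) * (k - t)) :=
        mul_le_mul (pow_le_pow_left₀ (Nat.cast_nonneg _) hm _)
          (pow_le_pow_of_le_one hw0 hw1 (by rw [mul_comm]; exact hexp)) (by positivity)
          (by positivity)
    _ = (n * w ^ (k + 1)) ^ (k - t) / (2 ^ (k + 1)) ^ (k - t) := by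
        rw [div_pow, mul_pow, ← pow_mul]; ring
    _ ≤ 1 / 2 ^ (k + 1) := by
        gcongr
        · exact pow_le_one₀ (by positivity) hnw
        · exact le_self_pow₀ (one_le_pow₀ one_le_two) ha

lemma overlapSum_copyEdges_le_half (hmk : m * k ≤ n) (hw0 : 0 ≤ w) (hw1 : w ≤ 1)
    (hnw : n * w ^ (k + 1) ≤ 1) (hm : (m : ℝ) ≤ n / 2 ^ (k + 1)) (g : Fin k → Fin m) :
    overlapSum (w ^ 2) (copyEdges hmk) g (univ.erase g) ≤ (w ^ 2) ^ k.choose 2 / 2 := by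
  have hw21 : w ^ 2 ≤ 1 := pow_le_one₀ hw0 hw1
  calc _ ≤ _ := overlapSum_copyEdges_le hmk (by positivity) hw21 g
    _ ≤ ∑ T : Finset (Fin k) with 2 ≤ #T ∧ #T < k, (w ^ 2) ^ k.choose 2 / 2 ^ (k + 1) :=
        sum_le_sum fun T hT => cast_pow_mul_pow_le hw0 hw1 hnw hm (mem_filter.1 hT).2.1
          (mem_filter.1 hT).2.2
    _ ≤ 2 ^ k * ((w ^ 2) ^ k.choose 2 / 2 ^ (k + 1)) := by
        rw [sum_const, nsmul_eq_mul]
        gcongr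
        exact_mod_cast (card_filter_le _ _).trans (by simp)
    _ = (w ^ 2) ^ k.choose 2 / 2 := by rw [pow_succ]; field_simp; ring

end Exponents

lemma pow_mul_sq_pow_choose_two {k : ℕ} {x w : ℝ} (hxw : x * w ^ (k + 1) = 1) (hk : 2 ≤ k) :
    x ^ k * (w ^ 2) ^ k.choose 2 = (x * w) ^ 2 := by
  obtain ⟨j, rfl⟩ := Nat.exists_eq_add_of_le' hk
  have hchoose : 2 * (j + 2).choose 2 = 2 + j * (j + 3) := by
    rw [two_mul_choose_two, show j + 2 - 1 = j + 1 by omega]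
    ring
  rw [← pow_mul, hchoose, show (x * w) ^ 2 = (x * w) ^ 2 * (x * w ^ (j + 2 + 1)) ^ j by
    rw [hxw, one_pow, mul_one]]
  ring

lemma div_two_pow_mul_le (n k : ℕ) : n / 2 ^ (k + 1) * k ≤ n :=
  (Nat.mul_le_mul_left _
    (Nat.lt_two_pow_self.le.trans (Nat.pow_le_pow_right two_pos k.le_succ))).trans
    (Nat.div_mul_le_self n _)

lemma div_two_pow_le_cast_div {n k : ℕ} (hn : 2 ^ (k + 1) ≤ n) :
    (n : ℝ) / 2 ^ (k + 2) ≤ (n / 2 ^ (k + 1) : ℕ) := by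
  have hm : 1 ≤ n / 2 ^ (k + 1) := (Nat.one_le_div_iff (by positivity)).2 hn
  have : n ≤ n / 2 ^ (k + 1) * 2 ^ (k + 2) :=
    calc n ≤ n / 2 ^ (k + 1) * 2 ^ (k + 1) + 2 ^ (k + 1) :=
          (Nat.lt_div_mul_add (by positivity)).le
      _ ≤ n / 2 ^ (k + 1) * 2 ^ (k + 1) + n / 2 ^ (k + 1) * 2 ^ (k + 1) := by
          gcongr; exact Nat.le_mul_of_pos_left _ hm
      _ = n / 2 ^ (k + 1) * 2 ^ (k + 2) := by ring
  rw [div_le_iff₀ (by positivity)]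
  exact_mod_cast this

lemma le_jansonExponent_copyEdges {n k : ℕ} {w p : ℝ} (hk : 2 ≤ k) (hn : 2 ^ (k + 1) ≤ n)
    (hw0 : 0 ≤ w) (hw1 : w ≤ 1) (hnw : n * w ^ (k + 1) = 1) (hp : p ≤ 4 * w ^ 2) :
    1 / (8 * (2 ^ (k + 2)) ^ k) * (n : ℝ) ^ 2 * p
      ≤ jansonExponent (w ^ 2) (copyEdges (div_two_pow_mul_le n k)) univ := by
  have hm : ((n / 2 ^ (k + 1) : ℕ) : ℝ) ≤ n / 2 ^ (k + 1) := by
    simpa using Nat.cast_div_le (α := ℝ) (m := n) (n := 2 ^ (k + 1))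
  calc 1 / (8 * (2 ^ (k + 2)) ^ k) * (n : ℝ) ^ 2 * p
      ≤ 1 / (8 * (2 ^ (k + 2)) ^ k) * (n : ℝ) ^ 2 * (4 * w ^ 2) := by gcongr
    _ = (n * w) ^ 2 / (2 * (2 ^ (k + 2)) ^ k) := by ring
    _ = ((n : ℝ) / 2 ^ (k + 2)) ^ k * ((w ^ 2) ^ k.choose 2 / 2) := by
        rw [← pow_mul_sq_pow_choose_two hnw hk, div_pow]
        ring
    _ ≤ ((n / 2 ^ (k + 1) : ℕ) : ℝ) ^ k * ((w ^ 2) ^ k.choose 2 / 2) := by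
        gcongr
        exact div_two_pow_le_cast_div hn
    _ = ∑ _g : Fin k → Fin (n / 2 ^ (k + 1)), (w ^ 2) ^ k.choose 2 / 2 := by simp
    _ ≤ _ := by
        refine sum_le_sum fun g _ => ?_
        rw [card_copyEdges]
        linarith [overlapSum_copyEdges_le_half (div_two_pow_mul_le n k) hw0 hw1 hnw.le hm g]

lemma le_half_of_mul_pow_eq_one {n k : ℕ} {w : ℝ} (hn : 2 ^ (k + 1) ≤ n) (hw0 : 0 ≤ w)
    (hnw : n * w ^ (k + 1) = 1) : w ≤ 1 / 2 := by
  have hn0 : (0 : ℝ) < n := by exact_mod_cast (Nat.one_le_two_pow).trans hn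
  refine (pow_le_pow_iff_left₀ hw0 (by norm_num) k.succ_ne_zero).1 ?_
  rw [eq_div_of_mul_eq hn0.ne' ((mul_comm _ _).trans hnw), div_pow, one_pow]
  gcongr
  exact_mod_cast hn

lemma rpow_neg_two_div_eq_sq {x : ℝ} (hx : 0 ≤ x) (r : ℝ) :
    x ^ (-2 / r) = (x ^ (-1 / r)) ^ 2 := by
  rw [← Real.rpow_mul_natCast hx]
  ring_nf

lemma mul_rpow_neg_one_div_pow {x : ℝ} (hx : 0 < x) (k : ℕ) :
    x * (x ^ (-1 / (k + 1 : ℝ))) ^ (k + 1) = 1 := by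
  rw [← Real.rpow_mul_natCast hx.le, Nat.cast_succ, div_mul_cancel₀ _ (by positivity),
    Real.rpow_neg_one, mul_inv_cancel₀ hx.ne']

/-- Probability that `G(T_{n,k}, p)` has no good copy of `K_k` is at most
`exp(-c₁ n² p)` for `n^{-2/(k+1)} ≤ p ≤ 4 n^{-2/(k+1)}`. -/
theorem no_good_copy_prob_binomial (k : ℕ) (hk : 3 ≤ k) :
    ∃ c₁ : ℝ, 0 < c₁ ∧ ∃ n₀ : ℕ, ∀ n : ℕ, n₀ ≤ n → ∀ p : ℝ,
      (n : ℝ) ^ (-2 / (k + 1 : ℝ)) ≤ p → p ≤ 4 * (n : ℝ) ^ (-2 / (k + 1 : ℝ)) →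
      edgeProb (turanEdges n k) p (fun A => ¬ GoodCopy n k A) ≤
        Real.exp (-(c₁ * (n : ℝ) ^ 2 * p)) := by
  refine ⟨1 / (8 * (2 ^ (k + 2)) ^ k), by positivity, 2 ^ (k + 1), fun n hn p hp hp' => ?_⟩
  have hn0 : (0 : ℝ) < n := by exact_mod_cast (Nat.one_le_two_pow).trans hn
  rw [rpow_neg_two_div_eq_sq hn0.le] at hp hp'
  set w := (n : ℝ) ^ (-1 / (k + 1 : ℝ))
  have hw0 : 0 ≤ w := by positivity
  have hnw : n * w ^ (k + 1) = 1 := mul_rpow_neg_one_div_pow hn0 k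
  have hw : w ≤ 1 / 2 := le_half_of_mul_pow_eq_one hn hw0 hnw
  have hp1 : p ≤ 1 := by nlinarith
  have hmk := div_two_pow_mul_le n k
  calc edgeProb (turanEdges n k) p (fun A => ¬ GoodCopy n k A)
      ≤ edgeProb (turanEdges n k) (w ^ 2) (fun A => ¬ GoodCopy n k A) :=
        edgeProb_le_edgeProb_of_antitone (by positivity) hp hp1 (antitone_not_goodCopy n k)
    _ ≤ edgeProb (turanEdges n k) (w ^ 2) (fun A => ∀ g ∈ univ, ¬ copyEdges hmk g ⊆ A) :=
        edgeProb_mono (by positivity) (hp.trans hp1) fun A _ h g _ hg =>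
          h (goodCopy_of_copyEdges_subset hmk hg)
    _ ≤ Real.exp (-jansonExponent (w ^ 2) (copyEdges hmk) univ) :=
        edgeProb_forall_not_subset_le_exp (by positivity) (hp.trans hp1)
          (copyEdges_subset_turanEdges hmk) univ
    _ ≤ Real.exp (-(1 / (8 * (2 ^ (k + 2)) ^ k) * (n : ℝ) ^ 2 * p)) :=
        Real.exp_le_exp.2 <| neg_le_neg <|
          le_jansonExponent_copyEdges (by omega) hn hw0 (by linarith) hnw hp'

end TournamentGame
end

section
/- Let T be a tournament with vertex set {v₁,…,v_k}, let G be a graph, let b ≥ 1, and let V(G) = V₁ ∪ … ∪ V_k be a partition of the vertex set of G. Let G' be the spanning subgraph of G consisting of all edges of G joining two distinct parts V_i, V_j. If Maker has a strategy in the (1:b) Maker-Breaker game on the edge set of G' to occupy a copy of K_k with at most one vertex in each part V_i, then Maker has a winning strategy in the (1:b) T-tournament game on G. -/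
namespace TournamentGame

variable {V : Type*} [DecidableEq V]

/-- If Maker can occupy a copy of `K_k` with at most one vertex in each
part of a partition (playing on the edges of `G` joining distinct parts), then she wins the
`(1:b)` `T`-tournament game on `G`, for any tournament `T` on `k` vertices. -/
theorem partition_strategy_transfer {V : Type*} [DecidableEq V] (k : ℕ)
    (T : Fin k → Fin k → Prop) (hT : IsTournament T) (b : ℕ) (hb : 1 ≤ b)
    (X : Finset (Sym2 V)) (hX : ∀ e ∈ X, ¬ e.IsDiag)
    (part : V → Fin k)
    (hMaker : MakerWin (X.filter fun e => ¬ (e.map part).IsDiag)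
      (fun Me => ∃ f : Fin k → V, Function.Injective f ∧
        (∀ i j : Fin k, i ≠ j → part (f i) ≠ part (f j)) ∧
        (∀ i j : Fin k, i ≠ j → s(f i, f j) ∈ Me)) b ∅ ∅) :
    OMakerWin X (HasTCopy T) b ∅ ∅ := by
  classical
  set X' : Finset (Sym2 V) := X.filter fun e => ¬ (e.map part).IsDiag with hX'def
  set F : Finset (Sym2 V) → Prop := fun Me => ∃ f : Fin k → V, Function.Injective f ∧
      (∀ i j : Fin k, i ≠ j → part (f i) ≠ part (f j)) ∧
      (∀ i j : Fin k, i ≠ j → s(f i, f j) ∈ Me) with hFdef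
  suffices H : ∀ M' Bs, MakerWin X' F b M' Bs →
      ∀ (M : Finset (V × V)) (B : Finset (Sym2 V)),
        undirect M = M' →
        (∀ p ∈ M, part p.1 ≠ part p.2 ∧ T (part p.1) (part p.2)) →
        B ∩ X' ⊆ Bs →
        OMakerWin X (HasTCopy T) b M B by
    exact H ∅ ∅ hMaker ∅ ∅ (by simp [undirect]) (by simp) (by simp)
  intro M' Bs hw
  induction hw with
  | win M' Bs hF =>
    intro M B hund hor hBX
    obtain ⟨f, hf1, hf2, hf3⟩ := hF
    refine OMakerWin.win M B ?_
    have hg : Function.Injective fun i => part (f i) := by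
      intro i j hij
      by_contra hne
      exact hf2 i j hne hij
    have hbij := Finite.injective_iff_bijective.mp hg
    let σ : Fin k ≃ Fin k := Equiv.ofBijective _ hbij
    refine ⟨f ∘ σ.symm, hf1.comp σ.symm.injective, ?_⟩
    have hpart : ∀ i, part (f (σ.symm i)) = i := fun i => σ.apply_symm_apply i
    intro i j hTij
    have hij : i ≠ j := by rintro rfl; exact hT.1 i hTij
    have hij' : σ.symm i ≠ σ.symm j := fun h => hij (σ.symm.injective h)
    have hmem := hf3 (σ.symm i) (σ.symm j) hij'
    rw [← hund] at hmem
    obtain ⟨p, hpM, hpe⟩ := Finset.mem_image.mp hmem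
    rcases Sym2.eq_iff.mp hpe with ⟨h1, h2⟩ | ⟨h1, h2⟩
    · have : p = (f (σ.symm i), f (σ.symm j)) := Prod.ext h1 h2
      rw [this] at hpM
      exact hpM
    · exfalso
      have hTji := (hor p hpM).2
      rw [h1, h2, hpart, hpart] at hTji
      exact ((hT.2 i j hij).mp hTij) hTji
  | move M' Bs e heX hefree h ih =>
    induction e using Sym2.ind with
    | _ x y =>
    intro M B hund hor hBX
    have hpx : part x ≠ part y := by
      have := (Finset.mem_filter.mp heX).2
      simpa [Sym2.map_pair_eq, Sym2.mk_isDiag_iff] using this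
    have key : ∀ u v : V, s(u, v) = s(x, y) → T (part u) (part v) →
        OMakerWin X (HasTCopy T) b M B := by
      intro u v hs hTuv
      refine OMakerWin.move M B u v ?_ ?_ ?_
      · rw [hs]; exact (Finset.mem_filter.mp heX).1
      · rw [hs]
        simp only [Finset.mem_union, not_or]
        constructor
        · intro hm
          rw [hund] at hm
          exact hefree (Finset.mem_union_left _ hm)
        · intro hbmem
          exact hefree (Finset.mem_union_right _ (hBX (Finset.mem_inter.mpr ⟨hbmem, heX⟩)))
      · intro Breal hBsub hBcard
        rw [hs, hund] at hBsub hBcard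
        set tgt : Finset (Sym2 V) := X' \ (insert s(x, y) M' ∪ Bs) with htgt
        set D : Finset (Sym2 V) := (Breal ∩ X') \ Bs with hD
        have hD1 : D ⊆ tgt := by
          intro a ha
          rw [hD, Finset.mem_sdiff, Finset.mem_inter] at ha
          obtain ⟨⟨haB, haX'⟩, haBs⟩ := ha
          have := hBsub haB
          rw [Finset.mem_sdiff] at this
          rw [htgt, Finset.mem_sdiff]
          refine ⟨haX', ?_⟩
          rw [Finset.mem_union, not_or]
          exact ⟨fun hc => this.2 (Finset.mem_union_left _ hc), haBs⟩
        have hDb : D.card ≤ b := by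
          calc D.card ≤ Breal.card := Finset.card_le_card
                (fun a ha => (Finset.mem_inter.mp ((Finset.mem_sdiff.mp ha).1)).1)
            _ ≤ b := by rw [hBcard]; exact min_le_left _ _
        have hDn : D.card ≤ min b tgt.card :=
          le_min hDb (Finset.card_le_card hD1)
        obtain ⟨Bsim, hDB, hBt, hBc⟩ :=
          Finset.exists_subsuperset_card_eq hD1 hDn (min_le_right _ _)
        refine ih _ hBt hBc (insert (u, v) M) (B ∪ Breal) ?_ ?_ ?_
        · show undirect (insert (u, v) M) = insert s(x, y) M'
          rw [undirect, Finset.image_insert]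
          exact congrArg₂ insert (by simpa using hs) hund
        · intro p hp
          rcases Finset.mem_insert.mp hp with rfl | hp
          · constructor
            · intro hc; exact hT.1 _ (hc ▸ hTuv)
            · exact hTuv
          · exact hor p hp
        · intro a ha
          rw [Finset.mem_inter, Finset.mem_union] at ha
          obtain ⟨hab | hab, haX'⟩ := ha
          · exact Finset.mem_union_left _ (hBX (Finset.mem_inter.mpr ⟨hab, haX'⟩))
          · by_cases haBs : a ∈ Bs
            · exact Finset.mem_union_left _ haBs
            · exact Finset.mem_union_right _
                (hDB (by rw [hD, Finset.mem_sdiff, Finset.mem_inter]; exact ⟨⟨hab, haX'⟩, haBs⟩))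
    by_cases hxy : T (part x) (part y)
    · exact key x y rfl hxy
    · exact key y x (Sym2.eq_swap) ((hT.2 _ _ hpx.symm).mpr hxy)

end TournamentGame
end

section
/- Let G be a graph. Maker has a winning strategy in the unbiased Maker-Breaker triangle game on G if and only if G contains a triangle collection C such that Maker has a winning strategy in the unbiased Maker-Breaker triangle game on C. Similarly, Maker has a winning strategy in the unbiased T_C-tournament game on G if and only if G contains a triangle collection C such that Maker has a winning strategy in the unbiased T_C-tournament game on C. -/
namespace TournamentGame

variable {V : Type*} [DecidableEq V]

/-! ### Auxiliary lemmas for Statement 10 -/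

section Aux

open Finset

variable {V : Type*} [DecidableEq V]

lemma exists_subset_card_min (S : Finset (Sym2 V)) :
    ∃ R ⊆ S, R.card = min 1 S.card := by
  rcases S.eq_empty_or_nonempty with h | ⟨s, hs⟩
  · exact ⟨∅, by simp [h]⟩
  · refine ⟨{s}, by simpa using hs, ?_⟩
    have : 1 ≤ S.card := Finset.card_pos.2 ⟨s, hs⟩
    simp [Nat.min_eq_left this]

lemma card_sdiff_lt {X A A' : Finset (Sym2 V)} {e : Sym2 V}
    (heX : e ∈ X) (heA : e ∉ A) (hAA : A ⊆ A') (heA' : e ∈ A') :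
    (X \ A').card < (X \ A).card := by
  apply Finset.card_lt_card
  constructor
  · intro x hx
    simp only [Finset.mem_sdiff] at hx ⊢
    exact ⟨hx.1, fun hxA => hx.2 (hAA hxA)⟩
  · intro hsub
    have : e ∈ X \ A' := hsub (by simp [Finset.mem_sdiff, heX, heA])
    simp [Finset.mem_sdiff, heA'] at this

lemma clash {X : Finset (Sym2 V)} {F : Finset (Sym2 V) → Prop} {b : ℕ}
    {M B : Finset (Sym2 V)} (hM : MakerWin X F b M B) : ¬ BreakerBlock X F b M B := by
  induction hM with
  | win M B hF => rintro ⟨⟩; simp_all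
  | move M B e heX hefree h ih =>
    rintro ⟨_, _, hF, resp, hsub, hcard, hstep⟩
    exact ih (resp e) (hsub e heX hefree) (hcard e heX hefree) (hstep e heX hefree)

lemma oclash {X : Finset (Sym2 V)} {F : Finset (V × V) → Prop} {b : ℕ}
    {M : Finset (V × V)} {B : Finset (Sym2 V)} (hM : OMakerWin X F b M B) :
    ¬ OBreakerBlock X F b M B := by
  induction hM with
  | win M B hF => rintro ⟨⟩; simp_all
  | move M B x y heX hefree h ih =>
    rintro ⟨_, _, hF, resp, hsub, hcard, hstep⟩
    exact ih (resp x y) (hsub x y heX hefree) (hcard x y heX hefree) (hstep x y heX hefree)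

lemma determined (X : Finset (Sym2 V)) (F : Finset (Sym2 V) → Prop) (b : ℕ)
    (M B : Finset (Sym2 V)) : MakerWin X F b M B ∨ BreakerBlock X F b M B := by
  classical
  generalize hn : (X \ (M ∪ B)).card = n
  induction n using Nat.strong_induction_on generalizing M B with
  | _ n ih =>
  by_cases hF : F M
  · exact Or.inl (.win M B hF)
  by_cases hwin : ∃ e, e ∈ X ∧ e ∉ M ∪ B ∧ ∀ B' ⊆ X \ (insert e M ∪ B),
      B'.card = min b (X \ (insert e M ∪ B)).card → MakerWin X F b (insert e M) (B ∪ B')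
  · obtain ⟨e, heX, hfree, h⟩ := hwin
    exact Or.inl (.move M B e heX hfree fun B' h1 h2 => h B' h1 h2)
  · push_neg at hwin
    right
    have key : ∀ e, e ∈ X → e ∉ M ∪ B → ∃ B' ⊆ X \ (insert e M ∪ B),
        B'.card = min b (X \ (insert e M ∪ B)).card ∧
        BreakerBlock X F b (insert e M) (B ∪ B') := by
      intro e heX hfree
      obtain ⟨B', hsub', hcard', hnw⟩ := hwin e heX hfree
      refine ⟨B', hsub', hcard', ?_⟩
      have hlt : (X \ (insert e M ∪ (B ∪ B'))).card < n := by
        subst hn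
        refine card_sdiff_lt heX hfree ?_ (by simp)
        intro x hx
        simp only [Finset.mem_union] at hx ⊢
        rcases hx with h | h
        · exact Or.inl (Finset.mem_insert_of_mem h)
        · exact Or.inr (Or.inl h)
      rcases ih _ hlt (insert e M) (B ∪ B') rfl with hw | hb
      · exact absurd hw hnw
      · exact hb
    choose! resp hsub hcard hblock using key
    exact .step M B hF resp hsub hcard hblock

lemma odetermined (X : Finset (Sym2 V)) (F : Finset (V × V) → Prop) (b : ℕ)
    (M : Finset (V × V)) (B : Finset (Sym2 V)) :
    OMakerWin X F b M B ∨ OBreakerBlock X F b M B := by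
  classical
  generalize hn : (X \ (undirect M ∪ B)).card = n
  induction n using Nat.strong_induction_on generalizing M B with
  | _ n ih =>
  by_cases hF : F M
  · exact Or.inl (.win M B hF)
  by_cases hwin : ∃ x y, s(x, y) ∈ X ∧ s(x, y) ∉ undirect M ∪ B ∧
      ∀ B' ⊆ X \ (insert s(x, y) (undirect M) ∪ B),
      B'.card = min b (X \ (insert s(x, y) (undirect M) ∪ B)).card →
      OMakerWin X F b (insert (x, y) M) (B ∪ B')
  · obtain ⟨x, y, heX, hfree, h⟩ := hwin
    exact Or.inl (.move M B x y heX hfree fun B' h1 h2 => h B' h1 h2)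
  · push_neg at hwin
    right
    have key : ∀ x y : V, s(x, y) ∈ X → s(x, y) ∉ undirect M ∪ B →
        ∃ B' ⊆ X \ (insert s(x, y) (undirect M) ∪ B),
        B'.card = min b (X \ (insert s(x, y) (undirect M) ∪ B)).card ∧
        OBreakerBlock X F b (insert (x, y) M) (B ∪ B') := by
      intro x y heX hfree
      obtain ⟨B', hsub', hcard', hnw⟩ := hwin x y heX hfree
      refine ⟨B', hsub', hcard', ?_⟩
      have hund : undirect (insert (x, y) M) = insert s(x, y) (undirect M) :=
        Finset.image_insert _ _ _
      have hlt : (X \ (undirect (insert (x, y) M) ∪ (B ∪ B'))).card < n := by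
        subst hn
        rw [hund]
        refine card_sdiff_lt heX hfree ?_ (by simp)
        intro z hz
        simp only [Finset.mem_union] at hz ⊢
        rcases hz with h | h
        · exact Or.inl (Finset.mem_insert_of_mem h)
        · exact Or.inr (Or.inl h)
      rcases ih _ hlt (insert (x, y) M) (B ∪ B') rfl with hw | hb
      · exact absurd hw hnw
      · exact hb
    choose! resp hsub hcard hblock using key
    exact .step M B hF resp hsub hcard hblock

end Aux

section Mono

open Finset

variable {V : Type*} [DecidableEq V]

lemma mono {C X : Finset (Sym2 V)} (hCX : C ⊆ X) {F : Finset (Sym2 V) → Prop}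
    {M Bc : Finset (Sym2 V)} (hw : MakerWin C F 1 M Bc) :
    ∀ B2 : Finset (Sym2 V), M ⊆ C → B2 ∩ C ⊆ Bc → MakerWin X F 1 M B2 := by
  classical
  induction hw with
  | win M Bc hF => exact fun B2 _ _ => .win M B2 hF
  | move M Bc e heC hefree h ih =>
    intro B2 hMC hB2
    have heM : e ∉ M := fun hm => hefree (Finset.mem_union_left _ hm)
    have heB2 : e ∉ B2 := fun hb => hefree (Finset.mem_union_right _ (hB2 (Finset.mem_inter.2 ⟨hb, heC⟩)))
    refine .move M B2 e (hCX heC) (by simp [heM, heB2]) ?_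
    intro B' hB' hcard
    set S := C \ (insert e M ∪ Bc) with hS
    have hMC' : insert e M ⊆ C := Finset.insert_subset heC hMC
    by_cases hne : (B' ∩ S).Nonempty
    · -- Breaker's move is a fresh edge of C: feed it to the sub-strategy.
      have hb1 : B'.card ≤ 1 := by
        rw [hcard]; exact Nat.min_le_left _ _
      have hbc1 : (B' ∩ S).card = 1 := by
        have h1 : 1 ≤ (B' ∩ S).card := Finset.card_pos.2 hne
        have h2 : (B' ∩ S).card ≤ B'.card := Finset.card_le_card (Finset.inter_subset_left)
        omega
      have hBeq : B' ∩ S = B' := Finset.eq_of_subset_of_card_le Finset.inter_subset_left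
        (by omega)
      have hSne : S.Nonempty := by
        obtain ⟨g, hg⟩ := hne
        exact ⟨g, (Finset.mem_inter.1 hg).2⟩
      have hcS : B'.card = min 1 S.card := by
        have : 1 ≤ S.card := Finset.card_pos.2 hSne
        rw [Nat.min_eq_left this, ← hBeq]; exact hbc1
      refine ih B' (by rw [← hBeq]; exact Finset.inter_subset_right) hcS (B2 ∪ B') hMC' ?_
      intro x hx
      rcases Finset.mem_inter.1 hx with ⟨hx1, hx2⟩
      rcases Finset.mem_union.1 hx1 with h1 | h1
      · exact Finset.mem_union_left _ (hB2 (Finset.mem_inter.2 ⟨h1, hx2⟩))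
      · exact Finset.mem_union_right _ h1
    · -- Breaker's move adds nothing new inside C: pretend a phantom move.
      obtain ⟨R, hRS, hRcard⟩ := exists_subset_card_min S
      refine ih R hRS hRcard (B2 ∪ B') hMC' ?_
      intro x hx
      rcases Finset.mem_inter.1 hx with ⟨hx1, hx2⟩
      rcases Finset.mem_union.1 hx1 with h1 | h1
      · exact Finset.mem_union_left _ (hB2 (Finset.mem_inter.2 ⟨h1, hx2⟩))
      · -- x ∈ B' ∩ C, so x ∈ Bc since B' ∩ S = ∅
        have hxS : x ∉ S := fun hxs => hne ⟨x, Finset.mem_inter.2 ⟨h1, hxs⟩⟩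
        have hxX : x ∈ X \ (insert e M ∪ B2) := hB' h1
        rcases Finset.mem_sdiff.1 hxX with ⟨_, hx3⟩
        have : x ∈ insert e M ∪ Bc := by
          by_contra hc
          exact hxS (Finset.mem_sdiff.2 ⟨hx2, hc⟩)
        rcases Finset.mem_union.1 this with h2 | h2
        · exact absurd (Finset.mem_union_left _ h2) hx3
        · exact Finset.mem_union_left _ h2

lemma omono {C X : Finset (Sym2 V)} (hCX : C ⊆ X) {F : Finset (V × V) → Prop}
    {M : Finset (V × V)} {Bc : Finset (Sym2 V)} (hw : OMakerWin C F 1 M Bc) :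
    ∀ B2 : Finset (Sym2 V), undirect M ⊆ C → B2 ∩ C ⊆ Bc → OMakerWin X F 1 M B2 := by
  classical
  induction hw with
  | win M Bc hF => exact fun B2 _ _ => .win M B2 hF
  | move M Bc x y heC hefree h ih =>
    intro B2 hMC hB2
    have heM : s(x, y) ∉ undirect M := fun hm => hefree (Finset.mem_union_left _ hm)
    have heB2 : s(x, y) ∉ B2 := fun hb =>
      hefree (Finset.mem_union_right _ (hB2 (Finset.mem_inter.2 ⟨hb, heC⟩)))
    refine .move M B2 x y (hCX heC) (by simp [heM, heB2]) ?_
    intro B' hB' hcard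
    set S := C \ (insert s(x, y) (undirect M) ∪ Bc) with hS
    have hund : undirect (insert (x, y) M) = insert s(x, y) (undirect M) :=
      Finset.image_insert _ _ _
    have hMC' : undirect (insert (x, y) M) ⊆ C := by
      rw [hund]; exact Finset.insert_subset heC hMC
    by_cases hne : (B' ∩ S).Nonempty
    · have hb1 : B'.card ≤ 1 := by
        rw [hcard]; exact Nat.min_le_left _ _
      have hbc1 : (B' ∩ S).card = 1 := by
        have h1 : 1 ≤ (B' ∩ S).card := Finset.card_pos.2 hne
        have h2 : (B' ∩ S).card ≤ B'.card := Finset.card_le_card (Finset.inter_subset_left)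
        omega
      have hBeq : B' ∩ S = B' := Finset.eq_of_subset_of_card_le Finset.inter_subset_left
        (by omega)
      have hSne : S.Nonempty := by
        obtain ⟨g, hg⟩ := hne
        exact ⟨g, (Finset.mem_inter.1 hg).2⟩
      have hcS : B'.card = min 1 S.card := by
        have : 1 ≤ S.card := Finset.card_pos.2 hSne
        rw [Nat.min_eq_left this, ← hBeq]; exact hbc1
      refine ih B' (by rw [← hBeq]; exact Finset.inter_subset_right) hcS (B2 ∪ B') hMC' ?_
      intro z hz
      rcases Finset.mem_inter.1 hz with ⟨hz1, hz2⟩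
      rcases Finset.mem_union.1 hz1 with h1 | h1
      · exact Finset.mem_union_left _ (hB2 (Finset.mem_inter.2 ⟨h1, hz2⟩))
      · exact Finset.mem_union_right _ h1
    · obtain ⟨R, hRS, hRcard⟩ := exists_subset_card_min S
      refine ih R hRS hRcard (B2 ∪ B') hMC' ?_
      intro z hz
      rcases Finset.mem_inter.1 hz with ⟨hz1, hz2⟩
      rcases Finset.mem_union.1 hz1 with h1 | h1
      · exact Finset.mem_union_left _ (hB2 (Finset.mem_inter.2 ⟨h1, hz2⟩))
      · have hzS : z ∉ S := fun hzs => hne ⟨z, Finset.mem_inter.2 ⟨h1, hzs⟩⟩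
        have hzX : z ∈ X \ (insert s(x, y) (undirect M) ∪ B2) := hB' h1
        rcases Finset.mem_sdiff.1 hzX with ⟨_, hz3⟩
        have : z ∈ insert s(x, y) (undirect M) ∪ Bc := by
          by_contra hc
          exact hzS (Finset.mem_sdiff.2 ⟨hz2, hc⟩)
        rcases Finset.mem_union.1 this with h2 | h2
        · exact absurd (Finset.mem_union_left _ h2) hz3
        · exact Finset.mem_union_left _ h2

end Mono

section Comp

open Finset

variable {V : Type*} [DecidableEq V]

/-- The relation on triangle edge-sets used for connectivity of `T_A`. -/
def TriRel (A : Finset (Sym2 V)) (a b : Finset (Sym2 V)) : Prop :=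
  a ∈ TriSets A ∧ b ∈ TriSets A ∧ (a ∩ b).Nonempty

/-- The edges of the connected component of `T_X` containing the triangle `t`. -/
noncomputable def comp (X : Finset (Sym2 V)) (t : Finset (Sym2 V)) : Finset (Sym2 V) :=
  @Finset.filter _ (fun e => ∃ t', Relation.ReflTransGen (TriRel X) t t' ∧ e ∈ t')
    (Classical.decPred _) X

lemma mem_comp {X t : Finset (Sym2 V)} {e : Sym2 V} :
    e ∈ comp X t ↔ e ∈ X ∧ ∃ t', Relation.ReflTransGen (TriRel X) t t' ∧ e ∈ t' := by
  unfold comp; exact @Finset.mem_filter _ _ (Classical.decPred _) _ _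

lemma comp_subset (X : Finset (Sym2 V)) (t : Finset (Sym2 V)) : comp X t ⊆ X :=
  fun e he => (mem_comp.1 he).1

lemma reflTransGen_symm {α : Type*} {r : α → α → Prop} (hs : ∀ {a b}, r a b → r b a)
    {a b : α} (h : Relation.ReflTransGen r a b) : Relation.ReflTransGen r b a := by
  induction h with
  | refl => exact .refl
  | tail _ hrel ih => exact Relation.ReflTransGen.trans (.single (hs hrel)) ih

lemma triSets_mem_reach {X : Finset (Sym2 V)} {t t' : Finset (Sym2 V)}
    (ht : t ∈ TriSets X) (h : Relation.ReflTransGen (TriRel X) t t') : t' ∈ TriSets X := by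
  induction h with
  | refl => exact ht
  | tail _ hrel ih => exact hrel.2.1

lemma triSets_edges_mem {X : Finset (Sym2 V)} {t : Finset (Sym2 V)}
    (ht : t ∈ TriSets X) : ∀ e ∈ t, e ∈ X := by
  obtain ⟨x, y, z, ⟨_, _, _, h1, h2, h3⟩, rfl⟩ := ht
  intro e he
  rcases Finset.mem_insert.1 he with rfl | he
  · exact h1
  rcases Finset.mem_insert.1 he with rfl | he
  · exact h2
  · rw [Finset.mem_singleton.1 he]; exact h3

lemma subset_comp {X : Finset (Sym2 V)} {t t' : Finset (Sym2 V)}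
    (ht : t ∈ TriSets X) (h : Relation.ReflTransGen (TriRel X) t t') :
    t' ⊆ comp X t := by
  intro e he
  exact mem_comp.2 ⟨triSets_edges_mem (triSets_mem_reach ht h) e he, t', h, he⟩

lemma self_subset_comp {X : Finset (Sym2 V)} {t : Finset (Sym2 V)}
    (ht : t ∈ TriSets X) : t ⊆ comp X t :=
  subset_comp ht Relation.ReflTransGen.refl

lemma mem_comp_elim {X : Finset (Sym2 V)} {t : Finset (Sym2 V)} {e : Sym2 V}
    (he : e ∈ comp X t) : ∃ t', Relation.ReflTransGen (TriRel X) t t' ∧ e ∈ t' :=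
  (mem_comp.1 he).2

lemma triRel_symm {X : Finset (Sym2 V)} : ∀ {a b}, TriRel X a b → TriRel X b a := by
  rintro a b ⟨h1, h2, h3⟩
  exact ⟨h2, h1, by rwa [Finset.inter_comm]⟩

lemma reach_symm {X : Finset (Sym2 V)} {a b : Finset (Sym2 V)}
    (h : Relation.ReflTransGen (TriRel X) a b) :
    Relation.ReflTransGen (TriRel X) b a :=
  reflTransGen_symm (fun h => triRel_symm h) h

/-- Key: if `e ∈ comp X t` and `e` belongs to a triangle `t''` of `X`, then `t''` is
reachable from `t`. -/
lemma reach_of_mem_comp {X : Finset (Sym2 V)} {t t'' : Finset (Sym2 V)} {e : Sym2 V}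
    (ht : t ∈ TriSets X) (he : e ∈ comp X t) (ht'' : t'' ∈ TriSets X) (he'' : e ∈ t'') :
    Relation.ReflTransGen (TriRel X) t t'' := by
  obtain ⟨t', hreach, het'⟩ := mem_comp_elim he
  exact hreach.tail ⟨triSets_mem_reach ht hreach, ht'', ⟨e, Finset.mem_inter.2 ⟨het', he''⟩⟩⟩

lemma comp_eq_of_reach {X : Finset (Sym2 V)} {t t' : Finset (Sym2 V)}
    (h : Relation.ReflTransGen (TriRel X) t t') : comp X t = comp X t' := by
  ext e
  simp only [mem_comp]
  constructor
  · rintro ⟨heX, u, hu, heu⟩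
    exact ⟨heX, u, Relation.ReflTransGen.trans (reach_symm h) hu, heu⟩
  · rintro ⟨heX, u, hu, heu⟩
    exact ⟨heX, u, Relation.ReflTransGen.trans h hu, heu⟩

lemma triSets_mono {A B : Finset (Sym2 V)} (h : A ⊆ B) : TriSets A ⊆ TriSets B := by
  rintro t ⟨x, y, z, ⟨h1, h2, h3, h4, h5, h6⟩, rfl⟩
  exact ⟨x, y, z, ⟨h1, h2, h3, h h4, h h5, h h6⟩, rfl⟩

lemma mem_triSets_comp {X : Finset (Sym2 V)} {t u : Finset (Sym2 V)}
    (hu : u ∈ TriSets X) (hsub : u ⊆ comp X t) : u ∈ TriSets (comp X t) := by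
  obtain ⟨x, y, z, ⟨h1, h2, h3, h4, h5, h6⟩, rfl⟩ := hu
  refine ⟨x, y, z, ⟨h1, h2, h3, ?_, ?_, ?_⟩, rfl⟩ <;>
    apply hsub <;> simp [triEdges]

/-- Along a reachability path from `t`, every triangle lies in `TriSets (comp X t)` and
is reachable from `t` inside `comp X t`. -/
lemma reach_in_comp {X : Finset (Sym2 V)} {t s : Finset (Sym2 V)} (ht : t ∈ TriSets X)
    (h : Relation.ReflTransGen (TriRel X) t s) :
    s ∈ TriSets (comp X t) ∧ Relation.ReflTransGen (TriRel (comp X t)) t s := by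
  induction h with
  | refl => exact ⟨mem_triSets_comp ht (self_subset_comp ht), .refl⟩
  | @tail b c hb hrel ih =>
    have hc : c ∈ TriSets (comp X t) :=
      mem_triSets_comp hrel.2.1 (subset_comp ht (hb.tail hrel))
    exact ⟨hc, ih.2.tail ⟨ih.1, hc, hrel.2.2⟩⟩

lemma triSets_nonempty_edge {A : Finset (Sym2 V)} {t : Finset (Sym2 V)}
    (ht : t ∈ TriSets A) : ∃ e, e ∈ t ∧ e ∈ A := by
  obtain ⟨x, y, z, ⟨_, _, _, h4, _, _⟩, rfl⟩ := ht
  exact ⟨s(x, y), by simp [triEdges], h4⟩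

/-- The component of any triangle is a triangle collection. -/
lemma comp_isCollection {X : Finset (Sym2 V)} {t : Finset (Sym2 V)}
    (ht : t ∈ TriSets X) : IsTriangleCollection (comp X t) := by
  constructor
  · intro e he
    obtain ⟨t', hreach, het'⟩ := mem_comp_elim he
    have ht' : t' ∈ TriSets X := triSets_mem_reach ht hreach
    obtain ⟨x, y, z, hxyz, rfl⟩ := ht'
    have hsub : triEdges x y z ⊆ comp X t := subset_comp ht hreach
    refine ⟨x, y, z, ⟨hxyz.1, hxyz.2.1, hxyz.2.2.1, ?_, ?_, ?_⟩, het'⟩ <;>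
      apply hsub <;> simp [triEdges]
  · intro a ha b hb
    -- both a and b are reachable from t inside comp X t
    have haX : a ∈ TriSets X := triSets_mono (comp_subset X t) ha
    have hbX : b ∈ TriSets X := triSets_mono (comp_subset X t) hb
    obtain ⟨ea, hea, heaC⟩ := triSets_nonempty_edge ha
    obtain ⟨eb, heb, hebC⟩ := triSets_nonempty_edge hb
    have hta : Relation.ReflTransGen (TriRel X) t a := reach_of_mem_comp ht heaC haX hea
    have htb : Relation.ReflTransGen (TriRel X) t b := reach_of_mem_comp ht hebC hbX heb
    have h1 := (reach_in_comp ht hta).2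
    have h2 := (reach_in_comp ht htb).2
    exact (reflTransGen_symm (fun h => triRel_symm h) h1).trans h2

end Comp

section Combine

open Finset

variable {V : Type*} [DecidableEq V]

lemma comp_eq_of_mem_both {X : Finset (Sym2 V)} {t t' : Finset (Sym2 V)} {e : Sym2 V}
    (ht : t ∈ TriSets X) (ht' : t' ∈ TriSets X)
    (he : e ∈ comp X t) (he' : e ∈ comp X t') : comp X t = comp X t' := by
  obtain ⟨u, hu, heu⟩ := mem_comp_elim he'
  have huX : u ∈ TriSets X := triSets_mem_reach ht' hu
  have h1 : Relation.ReflTransGen (TriRel X) t u := reach_of_mem_comp ht he huX heu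
  rw [comp_eq_of_reach h1, comp_eq_of_reach hu]

lemma combine_aux (X : Finset (Sym2 V)) :
    ∀ (n : ℕ) (M B : Finset (Sym2 V)), (X \ (M ∪ B)).card = n → M ⊆ X →
    (∀ t ∈ TriSets X, ∃ Bc, Bc ⊆ B ∩ comp X t ∧
        BreakerBlock (comp X t) HasTriangle 1 (M ∩ comp X t) Bc) →
    BreakerBlock X HasTriangle 1 M B := by
  classical
  intro n
  induction n using Nat.strong_induction_on with
  | _ n ih =>
  intro M B hn hMX hinv
  have hF : ¬ HasTriangle M := by
    rintro ⟨x, y, z, hxy, hyz, hxz, h1, h2, h3⟩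
    have ht0 : triEdges x y z ∈ TriSets X :=
      ⟨x, y, z, ⟨hxy, hyz, hxz, hMX h1, hMX h2, hMX h3⟩, rfl⟩
    obtain ⟨Bc, hBc, hBB⟩ := hinv _ ht0
    rcases hBB with ⟨_, _, hF0, _, _, _, _⟩
    apply hF0
    have hsub := self_subset_comp ht0
    exact ⟨x, y, z, hxy, hyz, hxz,
      Finset.mem_inter.2 ⟨h1, hsub (by simp [triEdges])⟩,
      Finset.mem_inter.2 ⟨h2, hsub (by simp [triEdges])⟩,
      Finset.mem_inter.2 ⟨h3, hsub (by simp [triEdges])⟩⟩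
  have key : ∀ e ∈ X, e ∉ M ∪ B → ∃ R, R ⊆ X \ (insert e M ∪ B) ∧
      R.card = min 1 (X \ (insert e M ∪ B)).card ∧
      (∀ t ∈ TriSets X, ∃ Bc, Bc ⊆ (B ∪ R) ∩ comp X t ∧
        BreakerBlock (comp X t) HasTriangle 1 (insert e M ∩ comp X t) Bc) := by
    intro e heX hefree
    have heM : e ∉ M := fun h => hefree (Finset.mem_union_left _ h)
    have heB : e ∉ B := fun h => hefree (Finset.mem_union_right _ h)
    by_cases htri : ∃ t₀ ∈ TriSets X, e ∈ comp X t₀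
    · obtain ⟨t₀, ht₀, heC⟩ := htri
      obtain ⟨Bc, hBc, hBB⟩ := hinv t₀ ht₀
      rcases hBB with ⟨_, _, hF0, resp0, hsub0, hcard0, h0⟩
      have heM' : e ∉ M ∩ comp X t₀ ∪ Bc := by
        intro h
        rcases Finset.mem_union.1 h with h | h
        · exact heM (Finset.mem_inter.1 h).1
        · exact heB (Finset.mem_inter.1 (hBc h)).1
      have hR0sub := hsub0 e heC heM'
      have hR0card := hcard0 e heC heM'
      have hBB' := h0 e heC heM'
      have hMeq : insert e M ∩ comp X t₀ = insert e (M ∩ comp X t₀) :=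
        Finset.insert_inter_of_mem heC
      have hR0C : resp0 e ⊆ comp X t₀ := fun x hx => (Finset.mem_sdiff.1 (hR0sub hx)).1
      -- update for components: shared helper
      have update : ∀ R : Finset (Sym2 V), resp0 e ⊆ B ∪ R →
          ∀ t ∈ TriSets X, ∃ Bc', Bc' ⊆ (B ∪ R) ∩ comp X t ∧
            BreakerBlock (comp X t) HasTriangle 1 (insert e M ∩ comp X t) Bc' := by
        intro R hRB t ht
        by_cases hM : e ∈ comp X t
        · have hcomp : comp X t = comp X t₀ := comp_eq_of_mem_both ht ht₀ hM heC
          refine ⟨Bc ∪ resp0 e, ?_, ?_⟩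
          · rw [hcomp]
            intro x hx
            rcases Finset.mem_union.1 hx with h | h
            · have := hBc h
              exact Finset.mem_inter.2 ⟨Finset.mem_union_left _ (Finset.mem_inter.1 this).1,
                (Finset.mem_inter.1 this).2⟩
            · exact Finset.mem_inter.2 ⟨hRB h, hR0C h⟩
          · rw [hcomp, hMeq]; exact hBB'
        · obtain ⟨Bc', hBc', hBB''⟩ := hinv t ht
          have hMeq' : insert e M ∩ comp X t = M ∩ comp X t :=
            Finset.insert_inter_of_notMem hM
          exact ⟨Bc', hBc'.trans (Finset.inter_subset_inter_right Finset.subset_union_left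
            |>.trans (by exact fun x hx => hx)), hMeq' ▸ hBB''⟩
      by_cases hf : ∃ f ∈ resp0 e, f ∉ B
      · obtain ⟨f, hfR, hfB⟩ := hf
        have hR01 : (resp0 e).card ≤ 1 := by
          rw [hR0card]; exact Nat.min_le_left _ _
        have hR0eq : resp0 e = {f} := by
          apply Finset.eq_singleton_iff_unique_mem.2
          refine ⟨hfR, fun g hg => ?_⟩
          by_contra hgf
          have : 2 ≤ (resp0 e).card := Finset.one_lt_card.2 ⟨g, hg, f, hfR, hgf⟩
          omega
        have hfX : f ∈ X \ (insert e M ∪ B) := by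
          have hfree0 := Finset.mem_sdiff.1 (hR0sub hfR)
          refine Finset.mem_sdiff.2 ⟨comp_subset X t₀ hfree0.1, ?_⟩
          intro hcon
          rcases Finset.mem_union.1 hcon with h | h
          · rcases Finset.mem_insert.1 h with rfl | h
            · exact hfree0.2 (Finset.mem_union_left _ (Finset.mem_insert_self _ _))
            · exact hfree0.2 (Finset.mem_union_left _
                (Finset.mem_insert_of_mem (Finset.mem_inter.2 ⟨h, hfree0.1⟩)))
          · exact hfB h
        refine ⟨{f}, by simpa using hfX, ?_, ?_⟩
        · have : 1 ≤ (X \ (insert e M ∪ B)).card := Finset.card_pos.2 ⟨f, hfX⟩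
          rw [Nat.min_eq_left this]; exact Finset.card_singleton f
        · exact update {f} (by rw [hR0eq]; intro x hx; simp_all)
      · push_neg at hf
        obtain ⟨R, hR, hRcard⟩ := exists_subset_card_min (X \ (insert e M ∪ B))
        exact ⟨R, hR, hRcard, update R fun x hx => Finset.mem_union_left _ (hf x hx)⟩
    · push_neg at htri
      obtain ⟨R, hR, hRcard⟩ := exists_subset_card_min (X \ (insert e M ∪ B))
      refine ⟨R, hR, hRcard, ?_⟩
      intro t ht
      obtain ⟨Bc, hBc, hBB⟩ := hinv t ht
      have heC : e ∉ comp X t := htri t ht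
      have hMeq : insert e M ∩ comp X t = M ∩ comp X t :=
        Finset.insert_inter_of_notMem heC
      exact ⟨Bc, hBc.trans (Finset.inter_subset_inter_right Finset.subset_union_left),
        hMeq ▸ hBB⟩
  choose! resp hsub hcard hinv' using key
  refine .step M B hF resp hsub hcard ?_
  intro e heX hefree
  have hlt : (X \ (insert e M ∪ (B ∪ resp e))).card < n := by
    subst hn
    refine card_sdiff_lt heX hefree ?_ (by simp)
    intro x hx
    rcases Finset.mem_union.1 hx with h | h
    · exact Finset.mem_union_left _ (Finset.mem_insert_of_mem h)
    · exact Finset.mem_union_right _ (Finset.mem_union_left _ h)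
  refine ih _ hlt (insert e M) (B ∪ resp e) rfl (Finset.insert_subset heX hMX) ?_
  intro t ht
  exact hinv' e heX hefree t ht

end Combine

section OCombine

open Finset

variable {V : Type*} [DecidableEq V]

lemma mem_undirect {M : Finset (V × V)} {e : Sym2 V} :
    e ∈ undirect M ↔ ∃ p ∈ M, s(p.1, p.2) = e := Finset.mem_image

lemma undirect_insert (x y : V) (M : Finset (V × V)) :
    undirect (insert (x, y) M) = insert s(x, y) (undirect M) :=
  Finset.image_insert _ _ _

lemma undirect_filter_subset {M : Finset (V × V)} (p : V × V → Prop) [DecidablePred p] :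
    undirect (M.filter p) ⊆ undirect M :=
  Finset.image_subset_image (Finset.filter_subset _ _)

lemma ocombine_aux (X : Finset (Sym2 V)) :
    ∀ (n : ℕ) (M : Finset (V × V)) (B : Finset (Sym2 V)),
    (X \ (undirect M ∪ B)).card = n → undirect M ⊆ X →
    (∀ t ∈ TriSets X, ∃ Bc, Bc ⊆ B ∩ comp X t ∧
        OBreakerBlock (comp X t) HasCyclicTriangle 1
          (M.filter fun p => s(p.1, p.2) ∈ comp X t) Bc) →
    OBreakerBlock X HasCyclicTriangle 1 M B := by
  classical
  intro n
  induction n using Nat.strong_induction_on with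
  | _ n ih =>
  intro M B hn hMX hinv
  have hF : ¬ HasCyclicTriangle M := by
    rintro ⟨x, y, z, hxy, hyz, hxz, h1, h2, h3⟩
    have hu1 : s(x, y) ∈ undirect M := mem_undirect.2 ⟨(x, y), h1, rfl⟩
    have hu2 : s(y, z) ∈ undirect M := mem_undirect.2 ⟨(y, z), h2, rfl⟩
    have hu3 : s(x, z) ∈ undirect M := mem_undirect.2 ⟨(z, x), h3, Sym2.eq_swap⟩
    have ht0 : triEdges x y z ∈ TriSets X :=
      ⟨x, y, z, ⟨hxy, hyz, hxz, hMX hu1, hMX hu2, hMX hu3⟩, rfl⟩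
    obtain ⟨Bc, hBc, hBB⟩ := hinv _ ht0
    rcases hBB with ⟨_, _, hF0, _, _, _, _⟩
    apply hF0
    have hsub := self_subset_comp ht0
    refine ⟨x, y, z, hxy, hyz, hxz, ?_, ?_, ?_⟩
    · exact Finset.mem_filter.2 ⟨h1, hsub (by simp [triEdges])⟩
    · exact Finset.mem_filter.2 ⟨h2, hsub (by simp [triEdges])⟩
    · refine Finset.mem_filter.2 ⟨h3, ?_⟩
      show s((z, x).1, (z, x).2) ∈ _
      rw [show s((z, x).1, (z, x).2) = s(x, z) from Sym2.eq_swap]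
      exact hsub (by simp [triEdges])
  have key : ∀ x y : V, s(x, y) ∈ X → s(x, y) ∉ undirect M ∪ B →
      ∃ R, R ⊆ X \ (insert s(x, y) (undirect M) ∪ B) ∧
      R.card = min 1 (X \ (insert s(x, y) (undirect M) ∪ B)).card ∧
      (∀ t ∈ TriSets X, ∃ Bc, Bc ⊆ (B ∪ R) ∩ comp X t ∧
        OBreakerBlock (comp X t) HasCyclicTriangle 1
          ((insert (x, y) M).filter fun p => s(p.1, p.2) ∈ comp X t) Bc) := by
    intro x y heX hefree
    have heM : s(x, y) ∉ undirect M := fun h => hefree (Finset.mem_union_left _ h)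
    have heB : s(x, y) ∉ B := fun h => hefree (Finset.mem_union_right _ h)
    by_cases htri : ∃ t₀ ∈ TriSets X, s(x, y) ∈ comp X t₀
    · obtain ⟨t₀, ht₀, heC⟩ := htri
      obtain ⟨Bc, hBc, hBB⟩ := hinv t₀ ht₀
      set Mc := M.filter fun p => s(p.1, p.2) ∈ comp X t₀ with hMc
      rcases hBB with ⟨_, _, hF0, resp0, hsub0, hcard0, h0⟩
      have hMcM : undirect Mc ⊆ undirect M := undirect_filter_subset _
      have heM' : s(x, y) ∉ undirect Mc ∪ Bc := by
        intro h
        rcases Finset.mem_union.1 h with h | h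
        · exact heM (hMcM h)
        · exact heB (Finset.mem_inter.1 (hBc h)).1
      have hR0sub := hsub0 x y heC heM'
      have hR0card := hcard0 x y heC heM'
      have hBB' := h0 x y heC heM'
      have hMeq : ((insert (x, y) M).filter fun p => s(p.1, p.2) ∈ comp X t₀) =
          insert (x, y) Mc := by
        rw [Finset.filter_insert, if_pos heC]
      have hR0C : resp0 x y ⊆ comp X t₀ := fun g hg => (Finset.mem_sdiff.1 (hR0sub hg)).1
      have update : ∀ R : Finset (Sym2 V), resp0 x y ⊆ B ∪ R →
          ∀ t ∈ TriSets X, ∃ Bc', Bc' ⊆ (B ∪ R) ∩ comp X t ∧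
            OBreakerBlock (comp X t) HasCyclicTriangle 1
              ((insert (x, y) M).filter fun p => s(p.1, p.2) ∈ comp X t) Bc' := by
        intro R hRB t ht
        by_cases hM : s(x, y) ∈ comp X t
        · have hcomp : comp X t = comp X t₀ := comp_eq_of_mem_both ht ht₀ hM heC
          refine ⟨Bc ∪ resp0 x y, ?_, ?_⟩
          · rw [hcomp]
            intro g hg
            rcases Finset.mem_union.1 hg with h | h
            · have := hBc h
              exact Finset.mem_inter.2 ⟨Finset.mem_union_left _ (Finset.mem_inter.1 this).1,
                (Finset.mem_inter.1 this).2⟩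
            · exact Finset.mem_inter.2 ⟨hRB h, hR0C h⟩
          · rw [hcomp, hMeq]; exact hBB'
        · obtain ⟨Bc', hBc', hBB''⟩ := hinv t ht
          have hMeq' : ((insert (x, y) M).filter fun p => s(p.1, p.2) ∈ comp X t) =
              M.filter fun p => s(p.1, p.2) ∈ comp X t := by
            rw [Finset.filter_insert, if_neg hM]
          exact ⟨Bc', hBc'.trans (Finset.inter_subset_inter_right Finset.subset_union_left),
            hMeq' ▸ hBB''⟩
      by_cases hf : ∃ f ∈ resp0 x y, f ∉ B
      · obtain ⟨f, hfR, hfB⟩ := hf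
        have hR01 : (resp0 x y).card ≤ 1 := by
          rw [hR0card]; exact Nat.min_le_left _ _
        have hR0eq : resp0 x y = {f} := by
          apply Finset.eq_singleton_iff_unique_mem.2
          refine ⟨hfR, fun g hg => ?_⟩
          by_contra hgf
          have : 2 ≤ (resp0 x y).card := Finset.one_lt_card.2 ⟨g, hg, f, hfR, hgf⟩
          omega
        have hfX : f ∈ X \ (insert s(x, y) (undirect M) ∪ B) := by
          have hfree0 := Finset.mem_sdiff.1 (hR0sub hfR)
          refine Finset.mem_sdiff.2 ⟨comp_subset X t₀ hfree0.1, ?_⟩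
          intro hcon
          rcases Finset.mem_union.1 hcon with h | h
          · rcases Finset.mem_insert.1 h with rfl | h
            · exact hfree0.2 (Finset.mem_union_left _ (Finset.mem_insert_self _ _))
            · obtain ⟨p, hpM, hpe⟩ := mem_undirect.1 h
              have hpMc : p ∈ Mc := Finset.mem_filter.2 ⟨hpM, by rw [hpe]; exact hfree0.1⟩
              exact hfree0.2 (Finset.mem_union_left _
                (Finset.mem_insert_of_mem (mem_undirect.2 ⟨p, hpMc, hpe⟩)))
          · exact hfB h
        refine ⟨{f}, by simpa using hfX, ?_, ?_⟩
        · have : 1 ≤ (X \ (insert s(x, y) (undirect M) ∪ B)).card :=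
            Finset.card_pos.2 ⟨f, hfX⟩
          rw [Nat.min_eq_left this]; exact Finset.card_singleton f
        · exact update {f} (by rw [hR0eq]; intro g hg; simp_all)
      · push_neg at hf
        obtain ⟨R, hR, hRcard⟩ := exists_subset_card_min (X \ (insert s(x, y) (undirect M) ∪ B))
        exact ⟨R, hR, hRcard, update R fun g hg => Finset.mem_union_left _ (hf g hg)⟩
    · push_neg at htri
      obtain ⟨R, hR, hRcard⟩ := exists_subset_card_min (X \ (insert s(x, y) (undirect M) ∪ B))
      refine ⟨R, hR, hRcard, ?_⟩
      intro t ht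
      obtain ⟨Bc, hBc, hBB⟩ := hinv t ht
      have heC : s(x, y) ∉ comp X t := htri t ht
      have hMeq : ((insert (x, y) M).filter fun p => s(p.1, p.2) ∈ comp X t) =
          M.filter fun p => s(p.1, p.2) ∈ comp X t := by
        rw [Finset.filter_insert, if_neg heC]
      exact ⟨Bc, hBc.trans (Finset.inter_subset_inter_right Finset.subset_union_left),
        hMeq ▸ hBB⟩
  choose! resp hsub hcard hinv' using key
  refine .step M B hF resp hsub hcard ?_
  intro x y heX hefree
  have hund : undirect (insert (x, y) M) = insert s(x, y) (undirect M) :=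
    undirect_insert x y M
  have hlt : (X \ (undirect (insert (x, y) M) ∪ (B ∪ resp x y))).card < n := by
    subst hn
    rw [hund]
    refine card_sdiff_lt heX hefree ?_ (by simp)
    intro g hg
    rcases Finset.mem_union.1 hg with h | h
    · exact Finset.mem_union_left _ (Finset.mem_insert_of_mem h)
    · exact Finset.mem_union_right _ (Finset.mem_union_left _ h)
  refine ih _ hlt (insert (x, y) M) (B ∪ resp x y) rfl ?_ ?_
  · rw [hund]
    exact Finset.insert_subset heX hMX
  · intro t ht
    exact hinv' x y heX hefree t ht

end OCombine
/-- Maker wins the (unbiased) triangle game on `G` iff `G` contains a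
triangle collection on which she wins; the same holds for the `T_C`-tournament game. -/
theorem reduction_to_collections {V : Type*} [DecidableEq V] (X : Finset (Sym2 V)) :
    (MakerWin X HasTriangle 1 ∅ ∅ ↔
      ∃ C ⊆ X, IsTriangleCollection C ∧ MakerWin C HasTriangle 1 ∅ ∅) ∧
    (OMakerWin X HasCyclicTriangle 1 ∅ ∅ ↔
      ∃ C ⊆ X, IsTriangleCollection C ∧ OMakerWin C HasCyclicTriangle 1 ∅ ∅) := by
  classical
  constructor
  · constructor
    · intro hM
      by_contra hC
      push_neg at hC
      have hcomp : ∀ t ∈ TriSets X, BreakerBlock (comp X t) HasTriangle 1 ∅ ∅ := by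
        intro t ht
        rcases determined (comp X t) HasTriangle 1 ∅ ∅ with hw | hb
        · exact absurd hw (hC (comp X t) (comp_subset X t) (comp_isCollection ht))
        · exact hb
      have hBB : BreakerBlock X HasTriangle 1 ∅ ∅ := by
        refine combine_aux X _ ∅ ∅ rfl (by simp) ?_
        intro t ht
        exact ⟨∅, by simp, by simpa using hcomp t ht⟩
      exact clash hM hBB
    · rintro ⟨C, hCX, _, hw⟩
      exact mono hCX hw ∅ (Finset.empty_subset C) (by simp)
  · constructor
    · intro hM
      by_contra hC
      push_neg at hC
      have hcomp : ∀ t ∈ TriSets X, OBreakerBlock (comp X t) HasCyclicTriangle 1 ∅ ∅ := by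
        intro t ht
        rcases odetermined (comp X t) HasCyclicTriangle 1 ∅ ∅ with hw | hb
        · exact absurd hw (hC (comp X t) (comp_subset X t) (comp_isCollection ht))
        · exact hb
      have hBB : OBreakerBlock X HasCyclicTriangle 1 ∅ ∅ := by
        refine ocombine_aux X _ ∅ ∅ rfl (by simp [undirect]) ?_
        intro t ht
        exact ⟨∅, by simp, by simpa using hcomp t ht⟩
      exact oclash hM hBB
    · rintro ⟨C, hCX, _, hw⟩
      exact omono hCX hw ∅ (by simp [undirect]) (by simp)

end TournamentGame
end

section
/- Let G be a very basic graph. Then Breaker has a strategy to prevent Maker from claiming all three edges of any triangle in the unbiased Maker-Breaker game on the edge set of G, even if Maker is allowed to claim two edges in the very first round (and one edge per round thereafter). -/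
/-!
Breaker answers Maker's double move `{e₁, e₂}` by claiming one edge `g` and then plays a pairing
strategy: every triangle avoiding `g` reserves two of its edges as a pair, and the pairs have to
be disjoint and avoid `e₁, e₂`. Equivalently, each surviving triangle gives up at most one edge;
it must give up its edge in `{e₁, e₂}`, and of two triangles sharing an edge outside `{e₁, e₂}`
one must give that edge up.

If `T_C` is a subgraph of a path, the triangles are numbered along the path and every chain of
adjacent triangles is oriented away from the (unique) triangle in it that meets `{e₁, e₂}`; the
edge `g` is chosen to cut a chain joining two such triangles. If `T_C` is a subgraph of `K₃⁺`,
then either it is a subgraph of a path after relabelling, or all edges shared by two triangles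
lie in one triangle `Z` (four pairwise adjacent triangles do not fit into `K₃⁺`); then every
other triangle gives up its edge in `Z`, and `g` is chosen to keep two triangles meeting
`{e₁, e₂}` from claiming the same edge of `Z`.
-/

namespace TournamentGame

section TriangleGeometry

variable {V : Type*} {C : Finset (Sym2 V)}

lemma IsTriangleIn.swap₁₂ {x y z : V} (h : IsTriangleIn C x y z) : IsTriangleIn C y x z := by
  obtain ⟨hxy, hyz, hxz, h1, h2, h3⟩ := h
  exact ⟨hxy.symm, hxz, hyz, Sym2.eq_swap ▸ h1, h3, h2⟩

lemma IsTriangleIn.swap₂₃ {x y z : V} (h : IsTriangleIn C x y z) : IsTriangleIn C x z y := by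
  obtain ⟨hxy, hyz, hxz, h1, h2, h3⟩ := h
  exact ⟨hxz, hyz.symm, hxy, h3, Sym2.eq_swap ▸ h2, h1⟩

variable [DecidableEq V]

@[simp]
lemma mem_triEdges {x y z : V} {e : Sym2 V} :
    e ∈ triEdges x y z ↔ e = s(x, y) ∨ e = s(y, z) ∨ e = s(x, z) := by
  simp [triEdges]

lemma triEdges_swap₁₂ (x y z : V) : triEdges x y z = triEdges y x z := by
  ext; simp [Sym2.eq_swap]; tauto

lemma triEdges_swap₂₃ (x y z : V) : triEdges x y z = triEdges x z y := by
  ext; simp [Sym2.eq_swap]; tauto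

lemma IsTriangleIn.triEdges_mem_triSets {x y z : V} (h : IsTriangleIn C x y z) :
    triEdges x y z ∈ TriSets C :=
  ⟨x, y, z, h, rfl⟩

lemma subset_of_mem_triSets {t : Finset (Sym2 V)} (ht : t ∈ TriSets C) : t ⊆ C := by
  obtain ⟨x, y, z, ⟨-, -, -, hxy, hyz, hxz⟩, rfl⟩ := ht
  intro e he
  rcases mem_triEdges.1 he with rfl | rfl | rfl <;> assumption

lemma card_of_mem_triSets {t : Finset (Sym2 V)} (ht : t ∈ TriSets C) : t.card = 3 := by
  obtain ⟨x, y, z, ⟨hxy, hyz, hxz, -⟩, rfl⟩ := ht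
  rw [triEdges, Finset.card_insert_of_notMem, Finset.card_pair]
  · simp [hyz, hxy.symm]
  · simp [hxy, hyz, hxz]

lemma exists_mem_notMem_pair {T : Finset (Sym2 V)} (hT : T ∈ TriSets C) (e₁ e₂ : Sym2 V) :
    ∃ g ∈ T, g ∉ ({e₁, e₂} : Finset (Sym2 V)) :=
  Finset.exists_mem_notMem_of_card_lt_card <| by
    rw [card_of_mem_triSets hT]
    exact Finset.card_le_two.trans_lt (by norm_num)

lemma exists_eq_triEdges_of_mem {t : Finset (Sym2 V)} (ht : t ∈ TriSets C) {a b : V}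
    (hab : s(a, b) ∈ t) : ∃ w, IsTriangleIn C a b w ∧ t = triEdges a b w := by
  obtain ⟨x, y, z, h, rfl⟩ := ht
  simp only [mem_triEdges, Sym2.eq_iff] at hab
  rcases hab with (⟨rfl, rfl⟩ | ⟨rfl, rfl⟩) | (⟨rfl, rfl⟩ | ⟨rfl, rfl⟩) | (⟨rfl, rfl⟩ | ⟨rfl, rfl⟩)
  · exact ⟨z, h, rfl⟩
  · exact ⟨z, h.swap₁₂, triEdges_swap₁₂ ..⟩
  · exact ⟨x, h.swap₁₂.swap₂₃, by rw [triEdges_swap₁₂, triEdges_swap₂₃]⟩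
  · exact ⟨x, h.swap₁₂.swap₂₃.swap₁₂, by rw [triEdges_swap₁₂, triEdges_swap₂₃, triEdges_swap₁₂]⟩
  · exact ⟨y, h.swap₂₃, triEdges_swap₂₃ ..⟩
  · exact ⟨y, h.swap₂₃.swap₁₂, by rw [triEdges_swap₂₃, triEdges_swap₁₂]⟩

lemma exists_eq_triEdges_of_mem_of_mem {t : Finset (Sym2 V)} (ht : t ∈ TriSets C)
    {a b : Sym2 V} (hab : a ≠ b) (ha : a ∈ t) (hb : b ∈ t) :
    ∃ x y z, IsTriangleIn C x y z ∧ t = triEdges x y z ∧ a = s(x, y) ∧ b = s(x, z) := by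
  induction a using Sym2.ind with
  | h p q =>
  obtain ⟨w, hw, rfl⟩ := exists_eq_triEdges_of_mem ht ha
  rcases mem_triEdges.1 hb with rfl | rfl | rfl
  · exact absurd rfl hab
  · exact ⟨q, p, w, hw.swap₁₂, triEdges_swap₁₂ .., Sym2.eq_swap, rfl⟩
  · exact ⟨p, q, w, hw, rfl, rfl, rfl⟩

lemma eq_of_mem_of_mem {t t' : Finset (Sym2 V)} (ht : t ∈ TriSets C) (ht' : t' ∈ TriSets C)
    {a b : Sym2 V} (hab : a ≠ b) (hat : a ∈ t) (hbt : b ∈ t) (hat' : a ∈ t') (hbt' : b ∈ t') :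
    t = t' := by
  induction a using Sym2.ind with
  | h p q =>
  obtain ⟨w, ⟨hpq, hqw, hpw, -⟩, rfl⟩ := exists_eq_triEdges_of_mem ht hat
  obtain ⟨w', ⟨-, hqw', hpw', -⟩, rfl⟩ := exists_eq_triEdges_of_mem ht' hat'
  have : w = w' := by
    simp only [mem_triEdges] at hbt hbt'
    grind [Sym2.eq_iff]
  rw [this]

lemma eq_of_pair_subset {t T : Finset (Sym2 V)} (ht : t ∈ TriSets C) (hT : T ∈ TriSets C)
    {e₁ e₂ : Sym2 V} (hne : e₁ ≠ e₂) (h : {e₁, e₂} ⊆ t) (h' : {e₁, e₂} ⊆ T) : t = T :=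
  eq_of_mem_of_mem ht hT hne (h (by simp)) (h (by simp)) (h' (by simp)) (h' (by simp))

lemma card_inter_le_one {t t' : Finset (Sym2 V)} (ht : t ∈ TriSets C) (ht' : t' ∈ TriSets C)
    (hne : t ≠ t') : (t ∩ t').card ≤ 1 :=
  Finset.card_le_one.2 fun a ha b hb => by
    by_contra hab
    rw [Finset.mem_inter] at ha hb
    exact hne (eq_of_mem_of_mem ht ht' hab ha.1 hb.1 ha.2 hb.2)

lemma card_inter_pair_le_one {t : Finset (Sym2 V)} {a b : Sym2 V} (h : ¬ {a, b} ⊆ t) :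
    (t ∩ {a, b}).card ≤ 1 := by
  by_contra hcard
  refine h (Finset.inter_eq_right.1 (Finset.eq_of_subset_of_card_le Finset.inter_subset_right ?_))
  have := Finset.card_le_two (a := a) (b := b)
  omega

/-- The three triangles are faces of a `K₄`, and `t₃` is its fourth face. -/
lemma exists_fourth_triangle_of_not_mem {t₀ t₁ t₂ : Finset (Sym2 V)} (h₀ : t₀ ∈ TriSets C)
    (h₁ : t₁ ∈ TriSets C) (h₂ : t₂ ∈ TriSets C) (h01 : t₀ ≠ t₁) {s : Sym2 V}
    (hs₀ : s ∈ t₀) (hs₁ : s ∈ t₁) (hs₂ : s ∉ t₂) (h02 : (t₀ ∩ t₂).Nonempty)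
    (h12 : (t₁ ∩ t₂).Nonempty) :
    ∃ t₃ ∈ TriSets C, t₃ ≠ t₀ ∧ t₃ ≠ t₁ ∧ t₃ ≠ t₂ ∧
      (t₀ ∩ t₃).Nonempty ∧ (t₁ ∩ t₃).Nonempty ∧ (t₂ ∩ t₃).Nonempty := by
  obtain ⟨a, ha⟩ := h02
  obtain ⟨b, hb⟩ := h12
  rw [Finset.mem_inter] at ha hb
  obtain ⟨ha₀, ha₂⟩ := ha
  obtain ⟨hb₁, hb₂⟩ := hb
  obtain ⟨x, y, z, ⟨hxy, hyz, hxz, hCxy, hCyz, hCxz⟩, rfl, rfl, rfl⟩ :=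
    exists_eq_triEdges_of_mem_of_mem h₀ (by rintro rfl; exact hs₂ ha₂) hs₀ ha₀
  obtain ⟨w, ⟨-, hyw, hxw, -, hCyw, -⟩, rfl⟩ := exists_eq_triEdges_of_mem h₁ hs₁
  obtain ⟨r, ⟨-, hzr, hxr, -, hCzr, -⟩, rfl⟩ := exists_eq_triEdges_of_mem h₂ ha₂
  have hzw : z ≠ w := by rintro rfl; exact h01 rfl
  simp only [mem_triEdges] at hb₁ hb₂ hs₂
  obtain rfl : r = w := by grind [Sym2.eq_iff]
  refine ⟨triEdges y z r, IsTriangleIn.triEdges_mem_triSets ⟨hyz, hzr, hyw, hCyz, hCzr, hCyw⟩,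
    ?_, ?_, ?_, ⟨s(y, z), ?_⟩, ⟨s(y, r), ?_⟩, ⟨s(z, r), ?_⟩⟩ <;>
  first
  | (intro h; have := congrArg (s(y, z) ∈ ·) h; simp at this; grind)
  | (intro h; have := congrArg (s(y, r) ∈ ·) h; simp at this; grind)
  | simp

end TriangleGeometry

variable {V : Type*} [DecidableEq V]

lemma HasTriangle.exists_subset {X M : Finset (Sym2 V)} (h : HasTriangle M) (hM : M ⊆ X) :
    ∃ t ∈ TriSets X, t ⊆ M := by
  obtain ⟨x, y, z, hxy, hyz, hxz, h1, h2, h3⟩ := h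
  refine ⟨_, IsTriangleIn.triEdges_mem_triSets ⟨hxy, hyz, hxz, hM h1, hM h2, hM h3⟩, ?_⟩
  intro e he
  rcases mem_triEdges.1 he with rfl | rfl | rfl <;> assumption

lemma HasTriangle.three_le_card {M : Finset (Sym2 V)} (h : HasTriangle M) : 3 ≤ M.card := by
  obtain ⟨t, ht, htM⟩ := h.exists_subset subset_rfl
  exact card_of_mem_triSets ht ▸ Finset.card_le_card htM

section Pairing

variable {X M B : Finset (Sym2 V)}

def AdmitsPairing (X M B : Finset (Sym2 V)) : Prop :=
  M ⊆ X ∧ Disjoint M B ∧ ∃ P : Set (Finset (Sym2 V)),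
    (∀ p ∈ P, 2 ≤ p.card ∧ p ⊆ X \ (M ∪ B)) ∧ P.PairwiseDisjoint id ∧
    ∀ t ∈ TriSets X, (t ∩ B).Nonempty ∨ ∃ p ∈ P, p ⊆ t

lemma AdmitsPairing.not_hasTriangle (h : AdmitsPairing X M B) : ¬ HasTriangle M := by
  obtain ⟨hMX, hMB, P, hP, -, hcov⟩ := h
  intro hM
  obtain ⟨t, ht, htM⟩ := hM.exists_subset hMX
  rcases hcov t ht with ⟨b, hb⟩ | ⟨p, hp, hpt⟩
  · rw [Finset.mem_inter] at hb
    exact Finset.disjoint_left.1 hMB (htM hb.1) hb.2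
  · obtain ⟨a, ha⟩ := Finset.card_pos.1 (show 0 < p.card by have := (hP p hp).1; omega)
    have := (hP p hp).2 ha
    simp only [Finset.mem_sdiff, Finset.mem_union, not_or] at this
    exact this.2.1 (htM (hpt ha))

lemma exists_answer_in_pair {P : Set (Finset (Sym2 V))} (hdisj : P.PairwiseDisjoint id)
    {R : Finset (Sym2 V)} {e : Sym2 V} (hP : ∀ p ∈ P, e ∈ p → 2 ≤ p.card ∧ p.erase e ⊆ R) :
    ∃ B' ⊆ R, B'.card = min 1 R.card ∧ ∀ p ∈ P, e ∈ p → (p ∩ B').Nonempty := by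
  by_cases hp : ∃ p ∈ P, e ∈ p
  · obtain ⟨p, hp, hep⟩ := hp
    obtain ⟨f, hf⟩ : (p.erase e).Nonempty := by
      rw [← Finset.card_pos, Finset.card_erase_of_mem hep]; have := (hP p hp hep).1; omega
    have hfR : f ∈ R := (hP p hp hep).2 hf
    refine ⟨{f}, by simpa using hfR, ?_, fun q hq heq => ⟨f, ?_⟩⟩
    · have := Finset.card_pos.2 ⟨f, hfR⟩
      rw [Finset.card_singleton]
      omega
    · have : q = p := hdisj.elim hq hp (Finset.not_disjoint_iff.2 ⟨e, heq, hep⟩)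
      simpa [this] using Finset.mem_of_mem_erase hf
  · obtain ⟨B', hB', hcard⟩ := Finset.exists_subset_card_eq (min_le_right 1 R.card)
    exact ⟨B', hB', hcard, fun q hq heq => absurd ⟨q, hq, heq⟩ hp⟩

lemma AdmitsPairing.respond (h : AdmitsPairing X M B) {e : Sym2 V} (heX : e ∈ X)
    (he : e ∉ M ∪ B) :
    ∃ B' ⊆ X \ (insert e M ∪ B), B'.card = min 1 (X \ (insert e M ∪ B)).card ∧
      AdmitsPairing X (insert e M) (B ∪ B') := by
  obtain ⟨hMX, hMB, P, hP, hdisj, hcov⟩ := h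
  set R := X \ (insert e M ∪ B)
  obtain ⟨B', hB'R, hB'card, hB'P⟩ := exists_answer_in_pair hdisj (R := R) fun p hp _ =>
    ⟨(hP p hp).1, fun a ha => by
      have := (hP p hp).2 (Finset.mem_of_mem_erase ha)
      simp only [R, Finset.mem_sdiff, Finset.mem_union, Finset.mem_insert, not_or] at this ⊢
      exact ⟨this.1, ⟨Finset.ne_of_mem_erase ha, this.2.1⟩, this.2.2⟩⟩
  have heB' : e ∉ B' := fun h => by simpa [R] using hB'R h
  refine ⟨B', hB'R, hB'card, Finset.insert_subset heX hMX, ?_,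
    {p ∈ P | e ∉ p ∧ Disjoint p B'}, ?_, hdisj.subset fun p hp => hp.1, fun t ht => ?_⟩
  · have hMR : Disjoint M R := Finset.disjoint_of_subset_left (Finset.subset_insert e M)
      (Finset.disjoint_of_subset_left Finset.subset_union_left Finset.disjoint_sdiff)
    rw [Finset.disjoint_insert_left, Finset.disjoint_union_right, Finset.mem_union, not_or]
    exact ⟨⟨(Finset.mem_union.not.1 he) ∘ Or.inr, heB'⟩, hMB,
      Finset.disjoint_of_subset_right hB'R hMR⟩
  · rintro p ⟨hp, hep, hpB'⟩
    refine ⟨(hP p hp).1, fun a ha => ?_⟩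
    have := (hP p hp).2 ha
    have haB' : a ∉ B' := Finset.disjoint_left.1 hpB' ha
    simp only [Finset.mem_sdiff, Finset.mem_union, Finset.mem_insert, not_or] at this ⊢
    exact ⟨this.1, ⟨⟨fun h => hep (h ▸ ha), this.2.1⟩, this.2.2, haB'⟩⟩
  rcases hcov t ht with hB | ⟨p, hp, hpt⟩
  · exact Or.inl (hB.mono (Finset.inter_subset_inter_left Finset.subset_union_left))
  by_cases hkeep : e ∉ p ∧ Disjoint p B'
  · exact Or.inr ⟨p, ⟨hp, hkeep⟩, hpt⟩
  -- a pair that is no longer free now holds Breaker's answer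
  obtain ⟨f, hf⟩ : (p ∩ B').Nonempty := by
    rw [not_and_or, not_not] at hkeep
    rcases hkeep with hep | hpB'
    · exact hB'P p hp hep
    · exact Finset.not_disjoint_iff_nonempty_inter.1 hpB'
  rw [Finset.mem_inter] at hf
  exact Or.inl ⟨f, Finset.mem_inter.2 ⟨hpt hf.1, Finset.mem_union_right _ hf.2⟩⟩

theorem AdmitsPairing.breakerBlock (h : AdmitsPairing X M B) :
    BreakerBlock X HasTriangle 1 M B := by
  induction hn : (X \ (M ∪ B)).card using Nat.strong_induction_on generalizing M B with
  | _ n ih =>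
  choose! resp hsub hcard hresp using fun e (he : e ∈ X \ (M ∪ B)) =>
    h.respond (Finset.mem_sdiff.1 he).1 (Finset.mem_sdiff.1 he).2
  refine .step M B h.not_hasTriangle resp (fun e heX he => hsub e (Finset.mem_sdiff.2 ⟨heX, he⟩))
    (fun e heX he => hcard e (Finset.mem_sdiff.2 ⟨heX, he⟩)) fun e heX he => ?_
  have he : e ∈ X \ (M ∪ B) := Finset.mem_sdiff.2 ⟨heX, he⟩
  refine ih _ (hn ▸ Finset.card_lt_card ?_) (hresp e he) rfl
  refine Finset.ssubset_iff_of_subset (fun a ha => ?_) |>.2 ⟨e, he, by simp⟩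
  simp only [Finset.mem_sdiff, Finset.mem_union, Finset.mem_insert, not_or] at ha ⊢
  exact ⟨ha.1, ha.2.1.2, ha.2.2.1⟩

end Pairing

section Drop

variable {C M : Finset (Sym2 V)} {g : Sym2 V}

/-- After Breaker has claimed `g`, every triangle avoiding `g` keeps the edges outside `D t` as
its pair. -/
lemma admitsPairing_of_drop (hM : M ⊆ C) (hg : g ∈ C \ M) (D : Finset (Sym2 V) → Finset (Sym2 V))
    (hD : ∀ t ∈ TriSets C, g ∉ t → (D t).card ≤ 1 ∧ t ∩ M ⊆ D t)
    (hcov : ∀ t ∈ TriSets C, ∀ t' ∈ TriSets C, g ∉ t → g ∉ t' → t ≠ t' →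
      (t ∩ t') \ M ⊆ D t ∪ D t') :
    AdmitsPairing C M {g} := by
  have hkeep : ∀ t ∈ TriSets C, g ∉ t → ∀ a ∈ t \ D t, a ∈ t ∧ a ∉ M := fun t ht hgt a ha => by
    rw [Finset.mem_sdiff] at ha
    exact ⟨ha.1, fun h => ha.2 ((hD t ht hgt).2 (Finset.mem_inter.2 ⟨ha.1, h⟩))⟩
  refine ⟨hM, by simpa using (Finset.mem_sdiff.1 hg).2,
    {p | ∃ t ∈ TriSets C, g ∉ t ∧ p = t \ D t}, ?_, ?_, fun t ht => ?_⟩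
  · rintro _ ⟨t, ht, hgt, rfl⟩
    refine ⟨?_, fun a ha => ?_⟩
    · have := Finset.le_card_sdiff (D t) t
      rw [card_of_mem_triSets ht] at this
      have := (hD t ht hgt).1
      omega
    · obtain ⟨hat, haM⟩ := hkeep t ht hgt a ha
      simp only [Finset.mem_sdiff, Finset.mem_union, Finset.mem_singleton, not_or]
      exact ⟨subset_of_mem_triSets ht hat, haM, fun h => hgt (h ▸ hat)⟩
  · rintro _ ⟨t, ht, hgt, rfl⟩ _ ⟨t', ht', hgt', rfl⟩ hne
    refine Finset.disjoint_left.2 fun a ha ha' => ?_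
    have htt' : t ≠ t' := fun h => hne (by rw [h])
    obtain ⟨hat, haM⟩ := hkeep t ht hgt a ha
    have := hcov t ht t' ht' hgt hgt' htt'
      (show a ∈ (t ∩ t') \ M by simp [hat, (Finset.mem_sdiff.1 ha').1, haM])
    rw [Finset.mem_union] at this
    rw [id, Finset.mem_sdiff] at ha ha'
    tauto
  by_cases hgt : g ∈ t
  · exact Or.inl ⟨g, by simp [hgt]⟩
  · exact Or.inr ⟨t \ D t, ⟨t, ht, hgt, rfl⟩, Finset.sdiff_subset⟩

theorem breakerTurn_of_drop (hM : M ⊆ C) (hg : g ∈ C \ M) (D : Finset (Sym2 V) → Finset (Sym2 V))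
    (hD : ∀ t ∈ TriSets C, g ∉ t → (D t).card ≤ 1 ∧ t ∩ M ⊆ D t)
    (hcov : ∀ t ∈ TriSets C, ∀ t' ∈ TriSets C, g ∉ t → g ∉ t' → t ≠ t' →
      (t ∩ t') \ M ⊆ D t ∪ D t') :
    BreakerTurn C HasTriangle 1 M ∅ := by
  have hpairing := admitsPairing_of_drop hM hg D hD hcov
  have hfirst : {g} ⊆ C \ (M ∪ ∅) := by simpa using hg
  refine ⟨hpairing.not_hasTriangle, {g}, hfirst, ?_, by simpa using hpairing.breakerBlock⟩
  have := Finset.card_pos.2 ⟨g, hfirst (Finset.mem_singleton_self g)⟩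
  rw [Finset.card_singleton]
  omega

lemma breakerTurn_of_board_subset {b : ℕ} {F : Finset (Sym2 V) → Prop} (hC : C ⊆ M)
    (hF : ¬ F M) : BreakerTurn C F b M ∅ := by
  refine ⟨hF, ∅, by simp, by simp [Finset.sdiff_eq_empty_iff_subset.2 hC],
    .step M _ hF (fun _ => ∅) ?_ ?_ ?_⟩ <;>
  · intro e he he'
    exact absurd (hC he) (by simpa using he')

end Drop

section Hub

def IsHub (C Z : Finset (Sym2 V)) : Prop :=
  Z ∈ TriSets C ∧ ∀ t ∈ TriSets C, ∀ t' ∈ TriSets C, t ≠ t' → t ∩ t' ⊆ Z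

def IsCrossEdge (C : Finset (Sym2 V)) (e₁ e₂ s : Sym2 V) : Prop :=
  s ∉ ({e₁, e₂} : Finset (Sym2 V)) ∧
    ∃ u ∈ TriSets C, ∃ v ∈ TriSets C, e₁ ∈ u ∧ e₂ ∈ v ∧ s ∈ u ∧ s ∈ v

variable {C M Z : Finset (Sym2 V)} {g e₁ e₂ : Sym2 V}

lemma IsHub.mem_of_shared (hZ : IsHub C Z) {a a' : Finset (Sym2 V)} (ha : a ∈ TriSets C)
    (ha' : a' ∈ TriSets C) {e s s' : Sym2 V} (hea : e ∈ a) (hea' : e ∈ a') (hs : s ∈ a)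
    (hs' : s' ∈ a') (hsZ : s ∈ Z) (hs'Z : s' ∈ Z) (hss' : s ≠ s') : e ∈ Z := by
  by_cases haa' : a = a'
  · subst haa'
    rwa [eq_of_mem_of_mem ha hZ.1 hss' hs hs' hsZ hs'Z] at hea
  · exact hZ.2 a ha a' ha' haa' (Finset.mem_inter.2 ⟨hea, hea'⟩)

theorem IsHub.breakerTurn_of_isolated (hZ : IsHub C Z) (hM : M ⊆ C) (hg : g ∈ C \ M)
    (hcard : ∀ t ∈ TriSets C, g ∉ t → (t ∩ M).card ≤ 1)
    (hiso : ∀ u ∈ TriSets C, ∀ u' ∈ TriSets C, g ∉ u → g ∉ u' → u ≠ Z → u ≠ u' →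
      (u ∩ M).Nonempty → (u' = Z ∨ (u' ∩ M).Nonempty) → u ∩ u' ⊆ M) :
    BreakerTurn C HasTriangle 1 M ∅ := by
  -- a triangle other than `Z` not meeting `M` gives up its edge in `Z`
  refine breakerTurn_of_drop hM hg
    (fun t => if t = Z ∨ (t ∩ M).Nonempty then t ∩ M else t ∩ Z) (fun t ht hgt => ?_) ?_
  · split_ifs with h
    · exact ⟨hcard t ht hgt, subset_rfl⟩
    · rw [not_or, Finset.not_nonempty_iff_eq_empty] at h
      exact ⟨card_inter_le_one ht hZ.1 h.1, by simp [h.2]⟩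
  intro t ht t' ht' hgt hgt' htt' s hs
  rw [Finset.mem_sdiff, Finset.mem_inter] at hs
  obtain ⟨⟨hst, hst'⟩, hsM⟩ := hs
  have hsZ : s ∈ Z := hZ.2 t ht t' ht' htt' (Finset.mem_inter.2 ⟨hst, hst'⟩)
  by_cases hspec : t = Z ∨ (t ∩ M).Nonempty
  · by_cases hspec' : t' = Z ∨ (t' ∩ M).Nonempty
    · exfalso
      by_cases htZ : t = Z
      · have ht'Z : t' ≠ Z := fun h => htt' (htZ.trans h.symm)
        exact hsM (hiso t' ht' t ht hgt' hgt ht'Z (Ne.symm htt') (hspec'.resolve_left ht'Z)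
          (Or.inl htZ) (Finset.mem_inter.2 ⟨hst', hst⟩))
      · exact hsM (hiso t ht t' ht' hgt hgt' htZ htt' (hspec.resolve_left htZ) hspec'
          (Finset.mem_inter.2 ⟨hst, hst'⟩))
    · simp [hspec', hst', hsZ]
  · simp [hspec, hst, hsZ]

theorem IsHub.breakerTurn_of_subset (hZ : IsHub C Z) (hne : e₁ ≠ e₂) {T : Finset (Sym2 V)}
    (hT : T ∈ TriSets C) (hFT : {e₁, e₂} ⊆ T) : BreakerTurn C HasTriangle 1 {e₁, e₂} ∅ := by
  obtain ⟨g, hgT, hgF⟩ := exists_mem_notMem_pair hT e₁ e₂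
  refine hZ.breakerTurn_of_isolated (hFT.trans (subset_of_mem_triSets hT))
    (Finset.mem_sdiff.2 ⟨subset_of_mem_triSets hT hgT, hgF⟩)
    (fun t ht hgt => card_inter_pair_le_one fun h => hgt (eq_of_pair_subset ht hT hne h hFT ▸ hgT))
    ?_
  -- a triangle through `e ∈ {e₁, e₂}` other than `T` meets `Z` in `e` alone
  intro u hu u' hu' hgu _ huZ huu' ⟨e, he⟩ _ s hs
  rw [Finset.mem_inter] at he hs
  by_contra hsF
  have heZ : e ∈ Z :=
    hZ.2 u hu T hT (by rintro rfl; exact hgu hgT) (Finset.mem_inter.2 ⟨he.1, hFT he.2⟩)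
  have hsZ : s ∈ Z := hZ.2 u hu u' hu' huu' (Finset.mem_inter.2 hs)
  exact huZ (eq_of_mem_of_mem hu hZ.1 (by rintro rfl; exact hsF he.2) he.1 hs.1 heZ hsZ)

lemma IsHub.mem_of_isCrossEdge (hZ : IsHub C Z) (hT : ∀ T ∈ TriSets C, ¬ {e₁, e₂} ⊆ T)
    {s : Sym2 V} (hs : IsCrossEdge C e₁ e₂ s) : s ∈ Z := by
  obtain ⟨-, u, hu, v, hv, h1, h2, hsu, hsv⟩ := hs
  refine hZ.2 u hu v hv ?_ (Finset.mem_inter.2 ⟨hsu, hsv⟩)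
  rintro rfl
  exact hT u hu (Finset.insert_subset h1 (Finset.singleton_subset_iff.2 h2))

lemma IsHub.eq_of_isCrossEdge (hZ : IsHub C Z) (hT : ∀ T ∈ TriSets C, ¬ {e₁, e₂} ⊆ T)
    {s s' : Sym2 V} (hs : IsCrossEdge C e₁ e₂ s) (hs' : IsCrossEdge C e₁ e₂ s') : s = s' := by
  by_contra hss'
  have hsZ := hZ.mem_of_isCrossEdge hT hs
  have hs'Z := hZ.mem_of_isCrossEdge hT hs'
  obtain ⟨-, u, hu, v, hv, h1, h2, hsu, hsv⟩ := hs
  obtain ⟨-, u', hu', v', hv', h1', h2', hs'u', hs'v'⟩ := hs'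
  refine hT Z hZ.1 (Finset.insert_subset ?_ (Finset.singleton_subset_iff.2 ?_))
  · exact hZ.mem_of_shared hu hu' h1 h1' hsu hs'u' hsZ hs'Z hss'
  · exact hZ.mem_of_shared hv hv' h2 h2' hsv hs'v' hsZ hs'Z hss'

theorem IsHub.breakerTurn (hZ : IsHub C Z) (he₁ : e₁ ∈ C) (he₂ : e₂ ∈ C) (hne : e₁ ≠ e₂) :
    BreakerTurn C HasTriangle 1 {e₁, e₂} ∅ := by
  by_cases hT : ∃ T ∈ TriSets C, {e₁, e₂} ⊆ T
  · obtain ⟨T, hT, hFT⟩ := hT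
    exact hZ.breakerTurn_of_subset hne hT hFT
  push Not at hT
  -- Breaker claims the cross edge if there is one, and otherwise any edge of `Z`
  obtain ⟨g, hgZ, hgF, hg⟩ : ∃ g ∈ Z, g ∉ ({e₁, e₂} : Finset (Sym2 V)) ∧
      ∀ s, IsCrossEdge C e₁ e₂ s → s = g := by
    by_cases hcross : ∃ s, IsCrossEdge C e₁ e₂ s
    · obtain ⟨s, hs⟩ := hcross
      exact ⟨s, hZ.mem_of_isCrossEdge hT hs, hs.1, fun s' hs' => hZ.eq_of_isCrossEdge hT hs' hs⟩
    · obtain ⟨g, hgZ, hgF⟩ := exists_mem_notMem_pair hZ.1 e₁ e₂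
      exact ⟨g, hgZ, hgF, fun s hs => absurd ⟨s, hs⟩ hcross⟩
  refine hZ.breakerTurn_of_isolated (by simp [Finset.insert_subset_iff, he₁, he₂])
    (Finset.mem_sdiff.2 ⟨subset_of_mem_triSets hZ.1 hgZ, hgF⟩)
    (fun t ht _ => card_inter_pair_le_one (hT t ht)) ?_
  intro u hu u' hu' hgu hgu' _ huu' ⟨x, hx⟩ hu'hit s hs
  obtain ⟨y, hy⟩ := hu'hit.resolve_left fun h => hgu' (h ▸ hgZ)
  rw [Finset.mem_inter] at hx hy hs
  by_contra hsF
  have hxy : x ≠ y := by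
    rintro rfl
    exact huu' (eq_of_mem_of_mem hu hu' (by rintro rfl; exact hsF hx.2) hx.1 hs.1 hy.1 hs.2)
  simp only [Finset.mem_insert, Finset.mem_singleton] at hx hy
  obtain ⟨⟨hxu, rfl | rfl⟩, ⟨hyu', rfl | rfl⟩⟩ := And.intro hx hy
  · exact hxy rfl
  · exact hgu (hg s ⟨hsF, u, hu, u', hu', hxu, hyu', hs⟩ ▸ hs.1)
  · exact hgu (hg s ⟨hsF, u', hu', u, hu, hyu', hxu, hs.2, hs.1⟩ ▸ hs.1)
  · exact hxy rfl

end Hub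

section Path

def IsPathPos (C : Finset (Sym2 V)) (pos : Finset (Sym2 V) → ℕ) : Prop :=
  Set.InjOn pos (TriSets C) ∧ ∀ t ∈ TriSets C, ∀ t' ∈ TriSets C, t ≠ t' → (t ∩ t').Nonempty →
    pos t + 1 = pos t' ∨ pos t' + 1 = pos t

/-- `A` selects the triangles still in play. -/
def Linked (A : Finset (Sym2 V) → Prop) (M : Finset (Sym2 V)) (pos : Finset (Sym2 V) → ℕ)
    (a b : ℕ) : Prop :=
  ∀ k, a ≤ k → k < b →
    ∃ t u, A t ∧ A u ∧ pos t = k ∧ pos u = k + 1 ∧ ((t ∩ u) \ M).Nonempty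

def Separated (A : Finset (Sym2 V) → Prop) (M : Finset (Sym2 V))
    (pos : Finset (Sym2 V) → ℕ) : Prop :=
  ∀ h h', A h → A h' → (h ∩ M).Nonempty → (h' ∩ M).Nonempty → pos h < pos h' →
    ¬ Linked A M pos (pos h) (pos h')

def HitOnLeft (A : Finset (Sym2 V) → Prop) (M : Finset (Sym2 V)) (pos : Finset (Sym2 V) → ℕ)
    (t : Finset (Sym2 V)) : Prop :=
  ∃ h, A h ∧ (h ∩ M).Nonempty ∧ pos h < pos t ∧ Linked A M pos (pos h) (pos t)

variable {C M : Finset (Sym2 V)} {pos : Finset (Sym2 V) → ℕ} {A A' : Finset (Sym2 V) → Prop}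

lemma Linked.mono (hAA' : ∀ t, A t → A' t) {a b : ℕ} (h : Linked A M pos a b) :
    Linked A' M pos a b := fun k hak hkb => by
  obtain ⟨t, u, ht, hu, rest⟩ := h k hak hkb
  exact ⟨t, u, hAA' t ht, hAA' u hu, rest⟩

lemma Linked.of_le {a b b' : ℕ} (h : Linked A M pos a b) (hb : b' ≤ b) :
    Linked A M pos a b' := fun k hak hkb => h k hak (by omega)

lemma Separated.mono (hAA' : ∀ t, A t → A' t) (h : Separated A' M pos) :
    Separated A M pos := fun k k' hk hk' hkM hk'M hlt hlink =>
  h k k' (hAA' k hk) (hAA' k' hk') hkM hk'M hlt (hlink.mono hAA')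

lemma Separated.not_hit_and_not_hitOnLeft (hsep : Separated A M pos) {t t' : Finset (Sym2 V)}
    (ht : A t) (ht' : A t') (hadj : pos t + 1 = pos t') (hs : ((t ∩ t') \ M).Nonempty)
    (h : (t' ∩ M).Nonempty ∨ ¬ HitOnLeft A M pos t') :
    ¬ (t ∩ M).Nonempty ∧ ¬ HitOnLeft A M pos t := by
  have hlink : Linked A M pos (pos t) (pos t') := fun k hk hk' =>
    ⟨t, t', ht, ht', by omega, by omega, hs⟩
  have hextend : ∀ h, Linked A M pos (pos h) (pos t) → Linked A M pos (pos h) (pos t') :=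
    fun h hl k hk hk' => if hkt : k < pos t then hl k hk hkt else hlink k (by omega) hk'
  rcases h with hhit' | hL'
  · exact ⟨fun hhit => hsep t t' ht ht' hhit hhit' (by omega) hlink,
      fun ⟨h, hAh, hh, hlt, hl⟩ => hsep h t' hAh ht' hh hhit' (by omega) (hextend h hl)⟩
  · exact ⟨fun hhit => hL' ⟨t, ht, hhit, by omega, hlink⟩,
      fun ⟨h, hAh, hh, hlt, hl⟩ => hL' ⟨h, hAh, hh, by omega, hextend h hl⟩⟩

lemma IsPathPos.not_linked_of_not_mem (hpos : IsPathPos C pos)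
    (hA : ∀ t, A t → t ∈ TriSets C) {t : Finset (Sym2 V)} (ht : t ∈ TriSets C) (hdead : ¬ A t)
    {a b : ℕ} (ha : a ≤ pos t) (hb : pos t < b) : ¬ Linked A M pos a b := fun h => by
  obtain ⟨u, -, hu, -, hut, -⟩ := h (pos t) ha hb
  exact hdead (hpos.1 (hA u hu) ht hut ▸ hu)

lemma IsPathPos.not_linked_of_mem_of_mem (hpos : IsPathPos C pos)
    (hA : ∀ t, A t → t ∈ TriSets C) {k k' : Finset (Sym2 V)} (hk : A k) (hk' : A k')
    {e : Sym2 V} (heM : e ∈ M) (hek : e ∈ k) (hek' : e ∈ k') (hlt : pos k < pos k') :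
    ¬ Linked A M pos (pos k) (pos k') := fun h => by
  have hkk' : k ≠ k' := by rintro rfl; omega
  have hadj : pos k + 1 = pos k' := by
    have := hpos.2 k (hA k hk) k' (hA k' hk') hkk' ⟨e, Finset.mem_inter.2 ⟨hek, hek'⟩⟩
    omega
  obtain ⟨t, u, ht, hu, htk, huk', s, hs⟩ := h (pos k) le_rfl hlt
  obtain rfl := hpos.1 (hA t ht) (hA k hk) htk
  obtain rfl := hpos.1 (hA u hu) (hA k' hk') (huk'.trans hadj)
  rw [Finset.mem_sdiff, Finset.mem_inter] at hs
  exact hkk' (eq_of_mem_of_mem (hA t ht) (hA u hu) (by rintro rfl; exact hs.2 heM)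
    hek hs.1.1 hek' hs.1.2)


variable {g e₁ e₂ : Sym2 V}

open Classical in
lemma IsPathPos.card_filter_le_one (hpos : IsPathPos C pos) (hA : ∀ u, A u → u ∈ TriSets C)
    {t : Finset (Sym2 V)} (ht : t ∈ TriSets C) {p : ℕ} (hp : p ≠ pos t) :
    (t.filter fun s => ∃ u, A u ∧ s ∈ u ∧ pos u = p).card ≤ 1 := by
  refine Finset.card_le_one.2 fun a ha b hb => ?_
  simp only [Finset.mem_filter] at ha hb
  obtain ⟨hat, u, hu, hau, rfl⟩ := ha
  obtain ⟨hbt, u', hu', hbu', hpos'⟩ := hb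
  obtain rfl : u = u' := hpos.1 (hA u hu) (hA u' hu') hpos'.symm
  have htu : t ≠ u := by rintro rfl; exact hp rfl
  exact Finset.card_le_one.1 (card_inter_le_one ht (hA u hu) htu) a
    (Finset.mem_inter.2 ⟨hat, hau⟩) b (Finset.mem_inter.2 ⟨hbt, hbu'⟩)

theorem IsPathPos.breakerTurn_of_separated (hpos : IsPathPos C pos) (hM : M ⊆ C)
    (hg : g ∈ C \ M) (hcard : ∀ t ∈ TriSets C, g ∉ t → (t ∩ M).card ≤ 1)
    (hsep : Separated (fun t => t ∈ TriSets C ∧ g ∉ t) M pos) :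
    BreakerTurn C HasTriangle 1 M ∅ := by
  classical
  set A : Finset (Sym2 V) → Prop := fun t => t ∈ TriSets C ∧ g ∉ t
  -- a triangle not meeting `M` gives up the edge it shares with its neighbour on the side away
  -- from the triangle meeting `M` that it is linked to, and its right edge if there is none
  set nbr : Finset (Sym2 V) → ℕ := fun t => if HitOnLeft A M pos t then pos t - 1 else pos t + 1
  set D : Finset (Sym2 V) → Finset (Sym2 V) := fun t =>
    if (t ∩ M).Nonempty then t ∩ M else t.filter fun s => ∃ u, A u ∧ s ∈ u ∧ pos u = nbr t
  have hnext : ∀ t, ¬ (t ∩ M).Nonempty → ∀ s ∈ t, ∀ u, A u → s ∈ u → pos u = nbr t →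
      s ∈ D t := fun t hM s hs u hu hsu hside => by
    simp only [D, if_neg hM, Finset.mem_filter]
    exact ⟨hs, u, hu, hsu, hside⟩
  refine breakerTurn_of_drop hM hg D (fun t ht hgt => ?_) ?_
  · by_cases hhit : (t ∩ M).Nonempty
    · simp only [D, if_pos hhit]
      exact ⟨hcard t ht hgt, subset_rfl⟩
    simp only [D, if_neg hhit, Finset.not_nonempty_iff_eq_empty.1 hhit, Finset.empty_subset,
      and_true]
    refine hpos.card_filter_le_one (fun u hu => hu.1) ht ?_
    simp only [nbr]
    split_ifs with hL
    · obtain ⟨h, -, -, hlt, -⟩ := hL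
      omega
    · omega
  intro t ht t' ht' hgt hgt' htt' s hs
  wlog hadj : pos t + 1 = pos t' generalizing t t'
  · have hadj' := (hpos.2 t ht t' ht' htt' ⟨s, (Finset.mem_sdiff.1 hs).1⟩).resolve_left hadj
    rw [Finset.union_comm]
    exact this t' ht' t ht hgt' hgt htt'.symm (by rwa [Finset.inter_comm]) hadj'
  have hst : s ∈ t ∧ s ∈ t' := Finset.mem_inter.1 (Finset.mem_sdiff.1 hs).1
  rw [Finset.mem_union]
  by_cases hright : (t' ∩ M).Nonempty ∨ ¬ HitOnLeft A M pos t'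
  · obtain ⟨hhit, hL⟩ := hsep.not_hit_and_not_hitOnLeft ⟨ht, hgt⟩ ⟨ht', hgt'⟩ hadj ⟨s, hs⟩ hright
    exact Or.inl (hnext t hhit s hst.1 t' ⟨ht', hgt'⟩ hst.2 (by simp [nbr, hL, hadj]))
  · rw [not_or, not_not] at hright
    exact Or.inr (hnext t' hright.1 s hst.2 t ⟨ht, hgt⟩ hst.1 (by simp [nbr, hright.2]; omega))

theorem IsPathPos.breakerTurn_of_subset (hpos : IsPathPos C pos) (hne : e₁ ≠ e₂)
    {T : Finset (Sym2 V)} (hT : T ∈ TriSets C) (hFT : {e₁, e₂} ⊆ T) :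
    BreakerTurn C HasTriangle 1 {e₁, e₂} ∅ := by
  obtain ⟨g, hgT, hgF⟩ := exists_mem_notMem_pair hT e₁ e₂
  refine hpos.breakerTurn_of_separated (hFT.trans (subset_of_mem_triSets hT))
    (Finset.mem_sdiff.2 ⟨subset_of_mem_triSets hT hgT, hgF⟩)
    (fun t ht hgt => card_inter_pair_le_one fun h => hgt (eq_of_pair_subset ht hT hne h hFT ▸ hgT))
    fun k k' hk hk' hkF hk'F hlt => ?_
  -- both are neighbours of the dead triangle `T`, on opposite sides of it
  have hnbr : ∀ u, u ∈ TriSets C ∧ g ∉ u → (u ∩ {e₁, e₂}).Nonempty →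
      pos u + 1 = pos T ∨ pos T + 1 = pos u := fun u hu ⟨x, hx⟩ => by
    rw [Finset.mem_inter] at hx
    exact hpos.2 u hu.1 T hT (by rintro rfl; exact hu.2 hgT)
      ⟨x, Finset.mem_inter.2 ⟨hx.1, hFT hx.2⟩⟩
  have := hnbr k hk hkF
  have := hnbr k' hk' hk'F
  exact hpos.not_linked_of_not_mem (fun t ht => ht.1) hT (fun h => h.2 hgT) (by omega) (by omega)

lemma IsPathPos.pos_add_one_eq_of_linked (hpos : IsPathPos C pos) {h x : Finset (Sym2 V)}
    (hh : h ∈ TriSets C) (hx : x ∈ TriSets C) (hxh : x ≠ h) {e : Sym2 V} (heM : e ∈ M)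
    (heh : e ∈ h) (hex : e ∈ x) {b : ℕ} (hb : pos h < b)
    (hlink : Linked (· ∈ TriSets C) M pos (pos h) b) : pos x + 1 = pos h :=
  (hpos.2 h hh x hx (Ne.symm hxh) ⟨e, Finset.mem_inter.2 ⟨heh, hex⟩⟩).resolve_left fun hadj =>
    hpos.not_linked_of_mem_of_mem (fun _ h => h) hh hx heM heh hex (by omega)
      (hlink.of_le (by omega))

lemma IsPathPos.separated_of_linked (hpos : IsPathPos C pos) {h h' : Finset (Sym2 V)}
    (hh : h ∈ TriSets C) (hh' : h' ∈ TriSets C) (hhit : (h ∩ {e₁, e₂}).Nonempty)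
    (hhit' : (h' ∩ {e₁, e₂}).Nonempty) (hlt : pos h < pos h')
    (hlink : Linked (· ∈ TriSets C) {e₁, e₂} pos (pos h) (pos h')) {g : Sym2 V} (hgh : g ∈ h) :
    Separated (fun t => t ∈ TriSets C ∧ g ∉ t) {e₁, e₂} pos := by
  have hA : ∀ t, t ∈ TriSets C → t ∈ TriSets C := fun _ h => h
  obtain ⟨e, he⟩ := hhit
  obtain ⟨e', he'⟩ := hhit'
  rw [Finset.mem_inter] at he he'
  have hee' : e ≠ e' := by
    rintro rfl
    exact hpos.not_linked_of_mem_of_mem hA hh hh' he.2 he.1 he'.1 hlt hlink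
  have hF : ∀ y ∈ ({e₁, e₂} : Finset (Sym2 V)), y = e ∨ y = e' := fun y hy => by
    have h₁ := he.2
    have h₂ := he'.2
    simp only [Finset.mem_insert, Finset.mem_singleton] at hy h₁ h₂
    grind
  -- the other triangles through `e` lie just left of `h`, those through `e'` not left of it
  have hleft : ∀ x ∈ TriSets C, x ≠ h → e ∈ x → pos x + 1 = pos h := fun x hx hxh hex =>
    hpos.pos_add_one_eq_of_linked hh hx hxh he.2 he.1 hex hlt hlink
  have hright : ∀ x ∈ TriSets C, e' ∈ x → pos h ≤ pos x := fun x hx hex => by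
    by_cases hxh' : x = h'
    · subst hxh'; omega
    · have := hpos.2 x hx h' hh' hxh' ⟨e', Finset.mem_inter.2 ⟨hex, he'.1⟩⟩
      omega
  intro k k' hk hk' ⟨x, hx⟩ ⟨x', hx'⟩ hkk' hlink'
  rw [Finset.mem_inter] at hx hx'
  have hkh : k ≠ h := fun heq => hk.2 (heq ▸ hgh)
  have hk'h : k' ≠ h := fun heq => hk'.2 (heq ▸ hgh)
  rcases hF x hx.2 with rfl | rfl <;> rcases hF x' hx'.2 with rfl | rfl
  · exact hpos.not_linked_of_mem_of_mem hA hk.1 hk'.1 hx.2 hx.1 hx'.1 hkk'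
      (hlink'.mono fun t ht => ht.1)
  · have := hleft k hk.1 hkh hx.1
    have := hright k' hk'.1 hx'.1
    have : pos k' ≠ pos h := fun heq => hk'h (hpos.1 hk'.1 hh heq)
    exact hpos.not_linked_of_not_mem (fun t ht => ht.1) hh (fun ha => ha.2 hgh)
      (by omega) (by omega) hlink'
  · have := hright k hk.1 hx.1
    have := hleft k' hk'.1 hk'h hx'.1
    omega
  · exact hpos.not_linked_of_mem_of_mem hA hk.1 hk'.1 hx.2 hx.1 hx'.1 hkk'
      (hlink'.mono fun t ht => ht.1)

theorem IsPathPos.breakerTurn (hpos : IsPathPos C pos) (he₁ : e₁ ∈ C) (he₂ : e₂ ∈ C)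
    (hne : e₁ ≠ e₂) (hfree : (C \ {e₁, e₂}).Nonempty) :
    BreakerTurn C HasTriangle 1 {e₁, e₂} ∅ := by
  by_cases hT : ∃ T ∈ TriSets C, {e₁, e₂} ⊆ T
  · obtain ⟨T, hT, hFT⟩ := hT
    exact hpos.breakerTurn_of_subset hne hT hFT
  push Not at hT
  have hFC : {e₁, e₂} ⊆ C := by simp [Finset.insert_subset_iff, he₁, he₂]
  have hcard : ∀ g, ∀ t ∈ TriSets C, g ∉ t → (t ∩ {e₁, e₂}).card ≤ 1 :=
    fun _ t ht _ => card_inter_pair_le_one (hT t ht)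
  by_cases hsep : Separated (· ∈ TriSets C) {e₁, e₂} pos
  · obtain ⟨g, hg⟩ := hfree
    exact hpos.breakerTurn_of_separated hFC hg (hcard g) (hsep.mono fun t ht => ht.1)
  · simp only [Separated, not_forall, not_not] at hsep
    obtain ⟨h, h', hh, hh', hhit, hhit', hlt, hlink⟩ := hsep
    obtain ⟨g, hgh, hgF⟩ := exists_mem_notMem_pair hh e₁ e₂
    exact hpos.breakerTurn_of_separated hFC
      (Finset.mem_sdiff.2 ⟨subset_of_mem_triSets hh hgh, hgF⟩) (hcard g)
      (hpos.separated_of_linked hh hh' hhit hhit' hlt hlink hgh)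

end Path

section VeryBasic

def IsTriangleGraphEmbedding {n : ℕ} (C : Finset (Sym2 V)) (adj : Fin n → Fin n → Prop)
    (φ : TriSets C → Fin n) : Prop :=
  Function.Injective φ ∧
    ∀ t t' : TriSets C, t ≠ t' → ((t : Finset (Sym2 V)) ∩ t').Nonempty → adj (φ t) (φ t')

variable {C : Finset (Sym2 V)}

lemma exists_isPathPos (ψ : TriSets C → ℕ) (hψ : Function.Injective ψ)
    (hadj : ∀ t t' : TriSets C, t ≠ t' → ((t : Finset (Sym2 V)) ∩ t').Nonempty →
      ψ t + 1 = ψ t' ∨ ψ t' + 1 = ψ t) :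
    ∃ pos, IsPathPos C pos := by
  classical
  refine ⟨fun t => if h : t ∈ TriSets C then ψ ⟨t, h⟩ else 0, fun t ht t' ht' h => ?_,
    fun t ht t' ht' hne hint => ?_⟩
  · simp only [dif_pos ht, dif_pos ht'] at h
    exact congrArg Subtype.val (hψ h)
  · simp only [dif_pos ht, dif_pos ht']
    exact hadj ⟨t, ht⟩ ⟨t', ht'⟩ (fun h => hne (congrArg Subtype.val h)) hint

lemma k3plusAdj_cases {a b : Fin 4} (h : K3plusAdj a b) :
    a = 2 ∨ b = 2 ∨ (a = 0 ∧ b = 1) ∨ (a = 1 ∧ b = 0) := by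
  revert a b; unfold K3plusAdj; decide

section K3plus

variable (φ : TriSets C → Fin 4)

lemma exists_isPathPos_of_k3plus (hφ : IsTriangleGraphEmbedding C K3plusAdj φ) (σ : Fin 4 → ℕ)
    (hσ : Function.Injective σ) {i j : Fin 4}
    (hσadj : ∀ a b, K3plusAdj a b → ¬ (a = i ∧ b = j) → ¬ (a = j ∧ b = i) →
      σ a + 1 = σ b ∨ σ b + 1 = σ a)
    (hij : ¬ ∃ t t' : TriSets C, ((t : Finset (Sym2 V)) ∩ t').Nonempty ∧ φ t = i ∧ φ t' = j) :
    ∃ pos, IsPathPos C pos :=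
  exists_isPathPos (fun t => σ (φ t)) (hσ.comp hφ.1) fun t t' hne hint =>
    hσadj _ _ (hφ.2 t t' hne hint) (fun h => hij ⟨t, t', hint, h⟩)
      fun h => hij ⟨t', t, by rwa [Finset.inter_comm], h.2, h.1⟩

/-- `T_C` contains no `K₄`, so three pairwise adjacent triangles share an edge. -/
lemma inter_subset_of_k3plus (hφ : IsTriangleGraphEmbedding C K3plusAdj φ) {T₀ T₁ Z : TriSets C}
    (hT₀ : φ T₀ = 0) (hT₁ : φ T₁ = 1) (hZ : φ Z = 2) (h0 : ((T₀ : Finset (Sym2 V)) ∩ Z).Nonempty)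
    (h1 : ((T₁ : Finset (Sym2 V)) ∩ Z).Nonempty) : (T₀ : Finset (Sym2 V)) ∩ T₁ ⊆ Z := by
  intro s hs
  rw [Finset.mem_inter] at hs
  by_contra hsZ
  obtain ⟨t₃, ht₃, h30, h31, h3Z, h03, -⟩ := exists_fourth_triangle_of_not_mem T₀.2 T₁.2 Z.2
    (fun h => by simp [Subtype.ext h ▸ hT₀] at hT₁) hs.1 hs.2 hsZ h0 h1
  have hne : ∀ T : TriSets C, (t₃ : Finset (Sym2 V)) ≠ T → φ ⟨t₃, ht₃⟩ ≠ φ T :=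
    fun T h heq => h (congrArg Subtype.val (hφ.1 heq))
  have hadj₀ := hφ.2 T₀ ⟨t₃, ht₃⟩ (fun h => h30 (congrArg Subtype.val h).symm) h03
  have h₀ := hne T₀ h30
  have h₁ := hne T₁ h31
  have h₂ := hne Z h3Z
  rw [hT₀] at hadj₀ h₀
  rw [hT₁] at h₁
  rw [hZ] at h₂
  revert hadj₀ h₀ h₁ h₂
  generalize φ ⟨t₃, ht₃⟩ = a
  revert a; unfold K3plusAdj; decide

lemma exists_isPathPos_or_isHub_of_k3plus (hφ : IsTriangleGraphEmbedding C K3plusAdj φ) :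
    (∃ pos, IsPathPos C pos) ∨ ∃ Z, IsHub C Z := by
  -- without a `0`-`2` or a `1`-`2` adjacency the triangles lie on the path `0-1-2-3`,
  -- respectively `1-0-2-3`
  by_cases h02 : ∃ t t' : TriSets C, ((t : Finset (Sym2 V)) ∩ t').Nonempty ∧ φ t = 0 ∧ φ t' = 2
  swap
  · exact Or.inl (exists_isPathPos_of_k3plus φ hφ Fin.val Fin.val_injective
      (by unfold K3plusAdj; decide) h02)
  by_cases h12 : ∃ t t' : TriSets C, ((t : Finset (Sym2 V)) ∩ t').Nonempty ∧ φ t = 1 ∧ φ t' = 2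
  swap
  · exact Or.inl (exists_isPathPos_of_k3plus φ hφ ![1, 0, 2, 3] (by decide)
      (by unfold K3plusAdj; decide) h12)
  obtain ⟨T₀, Z, hT₀Z, hT₀, hZ⟩ := h02
  obtain ⟨T₁, Z', hT₁Z', hT₁, hZ'⟩ := h12
  obtain rfl : Z = Z' := hφ.1 (hZ.trans hZ'.symm)
  have hT₀₁ := inter_subset_of_k3plus φ hφ hT₀ hT₁ hZ hT₀Z hT₁Z'
  refine Or.inr ⟨Z, Z.2, fun t ht t' ht' hne s hs => ?_⟩
  have hne' : (⟨t, ht⟩ : TriSets C) ≠ ⟨t', ht'⟩ := fun h => hne (congrArg Subtype.val h)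
  have hlabel : ∀ (u : TriSets C) (i : Fin 4) (U : TriSets C), φ u = i → φ U = i →
      (u : Finset (Sym2 V)) = U :=
    fun u i U hu hU => congrArg Subtype.val (hφ.1 (hu.trans hU.symm))
  rcases k3plusAdj_cases (hφ.2 _ _ hne' ⟨s, hs⟩) with h | h | ⟨h0, h1⟩ | ⟨h1, h0⟩
  · exact hlabel _ 2 Z h hZ ▸ (Finset.mem_inter.1 hs).1
  · exact hlabel _ 2 Z h hZ ▸ (Finset.mem_inter.1 hs).2
  · exact hT₀₁ (hlabel _ 0 T₀ h0 hT₀ ▸ hlabel _ 1 T₁ h1 hT₁ ▸ hs)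
  · exact hT₀₁ (Finset.inter_comm (T₁ : Finset (Sym2 V)) T₀ ▸
      hlabel _ 1 T₁ h1 hT₁ ▸ hlabel _ 0 T₀ h0 hT₀ ▸ hs)

end K3plus

lemma VeryBasic.exists_isPathPos_or_isHub (hC : VeryBasic C) :
    (∃ pos, IsPathPos C pos) ∨ ∃ Z, IsHub C Z := by
  rcases hC with ⟨φ, hφ⟩ | ⟨m, φ, hφ, hadj⟩
  · exact exists_isPathPos_or_isHub_of_k3plus φ hφ
  · exact Or.inl (exists_isPathPos (fun t => (φ t).val) (Fin.val_injective.comp hφ) hadj)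

end VeryBasic

/-- On a very basic graph, Breaker prevents triangles even if Maker
claims two edges in her very first move. -/
theorem very_basic_breaker_blocks {V : Type*} [DecidableEq V]
    (C : Finset (Sym2 V)) (hC : VeryBasic C) :
    ∀ e₁ ∈ C, ∀ e₂ ∈ C, e₁ ≠ e₂ →
      BreakerTurn C HasTriangle 1 {e₁, e₂} ∅ := by
  intro e₁ he₁ e₂ he₂ hne
  by_cases hfree : (C \ {e₁, e₂}).Nonempty
  · rcases hC.exists_isPathPos_or_isHub with ⟨pos, hpos⟩ | ⟨Z, hZ⟩
    · exact hpos.breakerTurn he₁ he₂ hne hfree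
    · exact hZ.breakerTurn he₁ he₂ hne
  · refine breakerTurn_of_board_subset (by simpa using hfree) fun h => ?_
    have := h.three_le_card
    have := Finset.card_le_two (a := e₁) (b := e₂)
    omega

end TournamentGame
end
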